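/- arXiv:2303.05914 — 3 statements merged into one kernel-verified Lean document; each statement's English description precedes it below -/
import Mathlib

section
/- Let X ⊆ [0,1] be a nonempty measurable target alphabet, D = [0,1] the decision space, and ℓ(a,b) = |a−b| the absolute loss with cumulative loss L(A_n,B_n) = Σ_{t=1}^n |a_t−b_t|. Let F = {f^θ : θ ∈ {1,…,N}} be a class of N expert prediction sequences f^θ ∈ [0,1]^n, and let L*(n) = inf_{x ∈ X^n} min_θ Σ_{t=1}^n |f^θ_t − x_t|. Suppose there is a measurable estimator x̂ : S → X such that for every target sequence x ∈ X^n, E_S[ Σ_{t=1}^n |x̂(S_t) − x_t| ] ≤ C_S(n), where S = (S_1,…,S_n) has conditionally independent entries S_t ∼ P(·|x_t). Then the minimax expected regret satisfies R(n) ≤ √((n/2)·log(N+1)) + min{ C_S(n) − L*(n), 0 }. -/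
open MeasureTheory ProbabilityTheory


lemma hoeffding_scalar (p : ℝ) (hp0 : 0 ≤ p) (hp1 : p ≤ 1) (t : ℝ) :
    1 - p + p * Real.exp t ≤ Real.exp (p * t + t ^ 2 / 8) := by
  set D : ℝ → ℝ := fun u => 1 - p + p * Real.exp u with hD
  have hDpos : ∀ u, 0 < D u := by
    intro u
    have h := Real.exp_pos u
    rcases hp0.eq_or_lt with h0 | h0
    · simp [hD, ← h0]
    · have h2 : 0 < p * Real.exp u := by positivity
      show (0:ℝ) < 1 - p + p * Real.exp u
      linarith
  have hDderiv : ∀ u, HasDerivAt D (p * Real.exp u) u := fun u =>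
    ((Real.hasDerivAt_exp u).const_mul p).const_add (1 - p)
  set F1 : ℝ → ℝ := fun u => p + u / 4 - p * Real.exp u / D u with hF1
  have hF1deriv : ∀ u, HasDerivAt F1 (1/4 - p * (1 - p) * Real.exp u / (D u)^2) u := by
    intro u
    have hdiv : HasDerivAt (fun u => p * Real.exp u / D u)
        ((p * Real.exp u * D u - p * Real.exp u * (p * Real.exp u)) / (D u)^2) u :=
      ((Real.hasDerivAt_exp u).const_mul p).div (hDderiv u) (hDpos u).ne'
    have h2 : HasDerivAt F1 (0 + 1/4 -
        (p * Real.exp u * D u - p * Real.exp u * (p * Real.exp u)) / (D u)^2) u :=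
      ((hasDerivAt_const u p).add ((hasDerivAt_id u).div_const 4)).sub hdiv
    have hnum : p * Real.exp u * D u - p * Real.exp u * (p * Real.exp u)
        = p * (1 - p) * Real.exp u := by
      show p * Real.exp u * (1 - p + p * Real.exp u)
          - p * Real.exp u * (p * Real.exp u) = p * (1 - p) * Real.exp u
      ring
    rw [hnum] at h2
    convert h2 using 1
    ring
  have hF1mono : Monotone F1 := by
    apply monotone_of_deriv_nonneg (fun u => (hF1deriv u).differentiableAt)
    intro u
    rw [(hF1deriv u).deriv]
    have hD2 : 0 < (D u)^2 := pow_pos (hDpos u) 2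
    rw [sub_nonneg, div_le_iff₀ hD2]
    have hDu : D u = 1 - p + p * Real.exp u := rfl
    rw [hDu]
    nlinarith [sq_nonneg (1 - p - p * Real.exp u), Real.exp_pos u]
  have hD0 : D 0 = 1 := by
    show 1 - p + p * Real.exp 0 = 1
    simp
  have hF10 : F1 0 = 0 := by
    show p + 0 / 4 - p * Real.exp 0 / D 0 = 0
    rw [hD0]; simp
  set H : ℝ → ℝ := fun u => p * u + u ^ 2 / 8 - Real.log (D u) with hH
  have hHderiv : ∀ u, HasDerivAt H (F1 u) u := by
    intro u
    have hlog : HasDerivAt (fun u => Real.log (D u)) (p * Real.exp u / D u) u :=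
      (hDderiv u).log (hDpos u).ne'
    have h2 : HasDerivAt H (p * 1 + (2:ℕ) * u ^ (2-1) / 8 - p * Real.exp u / D u) u :=
      (((hasDerivAt_id u).const_mul p).add ((hasDerivAt_pow 2 u).div_const 8)).sub hlog
    convert h2 using 1
    show p + u / 4 - p * Real.exp u / D u = _
    push_cast
    ring
  have hHdiff : Differentiable ℝ H := fun u => (hHderiv u).differentiableAt
  have hH0 : H 0 = 0 := by
    show p * 0 + 0 ^ 2 / 8 - Real.log (D 0) = 0
    rw [hD0, Real.log_one]; ring
  have key : ∀ u, Real.log (D u) ≤ p * u + u ^ 2 / 8 := by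
    intro u
    have h0le : 0 ≤ H u := by
      rcases le_total 0 u with hu | hu
      · have hmono : MonotoneOn H (Set.Ici 0) := by
          apply monotoneOn_of_deriv_nonneg (convex_Ici 0) hHdiff.continuous.continuousOn
            hHdiff.differentiableOn
          intro v hv
          rw [(hHderiv v).deriv, ← hF10]
          exact hF1mono (le_of_lt (by simpa [interior_Ici] using hv))
        have := hmono (Set.self_mem_Ici) (Set.mem_Ici.mpr hu) hu
        linarith [hH0]
      · have hanti : AntitoneOn H (Set.Iic 0) := by
          apply antitoneOn_of_deriv_nonpos (convex_Iic 0) hHdiff.continuous.continuousOn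
            hHdiff.differentiableOn
          intro v hv
          rw [(hHderiv v).deriv, ← hF10]
          exact hF1mono (le_of_lt (by simpa [interior_Iic] using hv))
        have := hanti (Set.mem_Iic.mpr hu) (Set.self_mem_Iic) hu
        linarith [hH0]
    have : Real.log (D u) ≤ p * u + u ^ 2 / 8 := by
      have := h0le
      simp only [hH] at this
      linarith
    exact this
  calc 1 - p + p * Real.exp t = D t := rfl
    _ = Real.exp (Real.log (D t)) := (Real.exp_log (hDpos t)).symm
    _ ≤ Real.exp (p * t + t ^ 2 / 8) := Real.exp_le_exp.mpr (key t)

lemma hoeffding_weighted {N : ℕ} (q v : Fin N → ℝ) (hq0 : ∀ θ, 0 ≤ q θ)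
    (hq1 : ∑ θ, q θ = 1) (hv : ∀ θ, v θ ∈ Set.Icc (0:ℝ) 1) (t : ℝ) :
    ∑ θ, q θ * Real.exp (t * v θ) ≤ Real.exp (t * (∑ θ, q θ * v θ) + t ^ 2 / 8) := by
  set m := ∑ θ, q θ * v θ with hm
  have hm0 : 0 ≤ m := Finset.sum_nonneg fun θ _ => mul_nonneg (hq0 θ) (hv θ).1
  have hm1 : m ≤ 1 := by
    calc m ≤ ∑ θ, q θ := Finset.sum_le_sum fun θ _ =>
            mul_le_of_le_one_right (hq0 θ) (hv θ).2
      _ = 1 := hq1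
  have hpt : ∀ θ, Real.exp (t * v θ) ≤ 1 - v θ + v θ * Real.exp t := by
    intro θ
    have hcvx := convexOn_exp.2 (Set.mem_univ (0:ℝ)) (Set.mem_univ t)
      (by linarith [(hv θ).2] : (0:ℝ) ≤ 1 - v θ) (hv θ).1 (by ring)
    simpa [mul_comm] using hcvx
  calc ∑ θ, q θ * Real.exp (t * v θ)
      ≤ ∑ θ, q θ * (1 - v θ + v θ * Real.exp t) :=
        Finset.sum_le_sum fun θ _ => mul_le_mul_of_nonneg_left (hpt θ) (hq0 θ)
    _ = 1 - m + m * Real.exp t := by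
        simp only [mul_add, mul_sub, mul_one, Finset.sum_add_distrib, Finset.sum_sub_distrib,
          ← Finset.sum_mul, hq1, ← hm, ← mul_assoc]
    _ ≤ Real.exp (m * t + t ^ 2 / 8) := hoeffding_scalar m hm0 hm1 t
    _ = Real.exp (t * m + t ^ 2 / 8) := by rw [mul_comm]

noncomputable def ewW (η : ℝ) {N : ℕ} (L : Fin N → ℝ) : ℝ := ∑ θ, Real.exp (-(η * L θ))

noncomputable def ewP (η : ℝ) {N : ℕ} (L g : Fin N → ℝ) : ℝ :=
  (∑ θ, Real.exp (-(η * L θ)) * g θ) / ewW η L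

lemma ewW_pos {η : ℝ} {N : ℕ} (hN : 0 < N) (L : Fin N → ℝ) : 0 < ewW η L :=
  Finset.sum_pos (fun θ _ => Real.exp_pos _) (Finset.univ_nonempty_iff.mpr ⟨⟨0, hN⟩⟩)

lemma ewP_mem {η : ℝ} {N : ℕ} (hN : 0 < N) (L g : Fin N → ℝ)
    (hg : ∀ θ, g θ ∈ Set.Icc (0:ℝ) 1) : ewP η L g ∈ Set.Icc (0:ℝ) 1 := by
  have hW := ewW_pos (η := η) hN L
  constructor
  · exact div_nonneg (Finset.sum_nonneg fun θ _ =>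
      mul_nonneg (Real.exp_pos _).le (hg θ).1) hW.le
  · rw [ewP, div_le_one hW]
    calc ∑ θ, Real.exp (-(η * L θ)) * g θ ≤ ∑ θ, Real.exp (-(η * L θ)) :=
        Finset.sum_le_sum fun θ _ => mul_le_of_le_one_right (Real.exp_pos _).le (hg θ).2
      _ = ewW η L := rfl

lemma ew_step {η : ℝ} (hη : 0 < η) {N : ℕ} (hN : 0 < N) (L g : Fin N → ℝ)
    (hg : ∀ θ, g θ ∈ Set.Icc (0:ℝ) 1) (y : ℝ) (hy : y ∈ Set.Icc (0:ℝ) 1) :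
    |ewP η L g - y| ≤
      (Real.log (ewW η L) - Real.log (ewW η (fun θ => L θ + |g θ - y|))) / η + η / 8 := by
  set W := ewW η L with hWdef
  have hW : 0 < W := ewW_pos hN L
  set q : Fin N → ℝ := fun θ => Real.exp (-(η * L θ)) / W with hq
  have hq0 : ∀ θ, 0 ≤ q θ := fun θ => div_nonneg (Real.exp_pos _).le hW.le
  have hq1 : ∑ θ, q θ = 1 := by
    rw [hq, ← Finset.sum_div]
    exact div_self hW.ne'
  set v : Fin N → ℝ := fun θ => |g θ - y| with hv
  have hvmem : ∀ θ, v θ ∈ Set.Icc (0:ℝ) 1 := by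
    intro θ
    refine ⟨abs_nonneg _, abs_le.mpr ⟨?_, ?_⟩⟩
    · linarith [(hg θ).1, hy.2]
    · linarith [(hg θ).2, hy.1]
  set m := ∑ θ, q θ * v θ with hm
  have step1 : |ewP η L g - y| ≤ m := by
    have hP : ewP η L g = ∑ θ, q θ * g θ := by
      rw [ewP, ← hWdef, Finset.sum_div]
      exact Finset.sum_congr rfl fun θ _ => by rw [hq]; ring
    have hy' : y = ∑ θ, q θ * y := by rw [← Finset.sum_mul, hq1, one_mul]
    rw [hP]
    have hsplit : ∑ θ, q θ * (g θ - y) = (∑ θ, q θ * g θ) - y := by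
      simp only [mul_sub, Finset.sum_sub_distrib, ← Finset.sum_mul, hq1, one_mul]
    calc |(∑ θ, q θ * g θ) - y| = |∑ θ, q θ * (g θ - y)| := by rw [hsplit]
      _ ≤ ∑ θ, |q θ * (g θ - y)| := Finset.abs_sum_le_sum_abs _ _
      _ = ∑ θ, q θ * v θ := Finset.sum_congr rfl fun θ _ => by
          rw [abs_mul, abs_of_nonneg (hq0 θ), hv]
      _ = m := rfl
  have hW' : 0 < ewW η (fun θ => L θ + v θ) := ewW_pos hN _
  have step2 : ewW η (fun θ => L θ + v θ) / W ≤ Real.exp (-η * m + (-η) ^ 2 / 8) := by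
    have := hoeffding_weighted q v hq0 hq1 hvmem (-η)
    have hlhs : ∑ θ, q θ * Real.exp (-η * v θ) = ewW η (fun θ => L θ + v θ) / W := by
      rw [ewW, Finset.sum_div]
      refine Finset.sum_congr rfl fun θ _ => ?_
      rw [hq]
      rw [div_mul_eq_mul_div, ← Real.exp_add]
      ring_nf
    rw [hlhs, ← hm] at this
    convert this using 3
  have hlog : Real.log (ewW η (fun θ => L θ + v θ)) - Real.log W ≤ -η * m + η ^ 2 / 8 := by
    have h1 : Real.log (ewW η (fun θ => L θ + v θ) / W) ≤ -η * m + (-η) ^ 2 / 8 :=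
      (Real.log_le_iff_le_exp (div_pos hW' hW)).mpr step2
    rw [Real.log_div hW'.ne' hW.ne'] at h1
    calc Real.log (ewW η (fun θ => L θ + v θ)) - Real.log W ≤ -η * m + (-η) ^ 2 / 8 := h1
      _ = -η * m + η ^ 2 / 8 := by ring
  have step3 : m ≤ (Real.log W - Real.log (ewW η (fun θ => L θ + v θ))) / η + η / 8 := by
    rw [← sub_nonneg]
    have h8 : 0 < (8:ℝ) := by norm_num
    have := hlog
    have hfrac : (Real.log W - Real.log (ewW η (fun θ => L θ + v θ))) / η + η / 8 - m
        = ((Real.log W - Real.log (ewW η (fun θ => L θ + v θ))) + η ^ 2 / 8 - η * m) / η := by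
      field_simp
    rw [hfrac]
    apply div_nonneg _ hη.le
    linarith
  exact step1.trans step3

noncomputable def cumLoss {n N : ℕ} (f : Fin N → Fin n → ℝ) (x : Fin n → ℝ)
    (k : ℕ) (θ : Fin N) : ℝ :=
  ∑ u ∈ Finset.range k, if h : u < n then |f θ ⟨u, h⟩ - x ⟨u, h⟩| else 0

lemma cumLoss_fin {n N : ℕ} (f : Fin N → Fin n → ℝ) (x : Fin n → ℝ) (t : Fin n) (θ : Fin N) :
    (∑ i : Fin t.1, |f θ (Fin.castLE t.isLt.le i) - x (Fin.castLE t.isLt.le i)|)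
      = cumLoss f x t.1 θ := by
  rw [cumLoss, ← Fin.sum_univ_eq_sum_range
    (fun u => if h : u < n then |f θ ⟨u, h⟩ - x ⟨u, h⟩| else 0) t.1]
  refine Finset.sum_congr rfl fun i _ => ?_
  have hi : i.1 < n := lt_of_lt_of_le i.isLt t.isLt.le
  rw [dif_pos hi]
  rfl

lemma cumLoss_full {n N : ℕ} (f : Fin N → Fin n → ℝ) (x : Fin n → ℝ) (θ : Fin N) :
    cumLoss f x n θ = ∑ t, |f θ t - x t| := by
  rw [cumLoss, ← Fin.sum_univ_eq_sum_range
    (fun u => if h : u < n then |f θ ⟨u, h⟩ - x ⟨u, h⟩| else 0) n]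
  exact Finset.sum_congr rfl fun i _ => by rw [dif_pos i.isLt]

lemma cumLoss_succ {n N : ℕ} (f : Fin N → Fin n → ℝ) (x : Fin n → ℝ) (t : Fin n) :
    (fun θ => cumLoss f x t.1 θ + |f θ t - x t|) = cumLoss f x (t.1 + 1) := by
  funext θ
  rw [cumLoss, cumLoss, Finset.sum_range_succ, dif_pos t.isLt, Fin.eta]

lemma ew_regret (n N : ℕ) (hN : 0 < N) (η : ℝ) (hη : 0 < η)
    (f : Fin N → Fin n → ℝ) (x : Fin n → ℝ)
    (hf : ∀ θ t, f θ t ∈ Set.Icc (0:ℝ) 1) (hx : ∀ t, x t ∈ Set.Icc (0:ℝ) 1) (θ0 : Fin N) :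
    ∑ t : Fin n, |ewP η
        (fun θ => ∑ i : Fin t.1, |f θ (Fin.castLE t.isLt.le i) - x (Fin.castLE t.isLt.le i)|)
        (fun θ => f θ t) - x t|
      ≤ (∑ t, |f θ0 t - x t|) + Real.log N / η + n * (η / 8) := by
  classical
  have hstep : ∀ t : Fin n,
      |ewP η (cumLoss f x t.1) (fun θ => f θ t) - x t|
        ≤ (Real.log (ewW η (cumLoss f x t.1)) - Real.log (ewW η (cumLoss f x (t.1 + 1)))) / η
          + η / 8 := by
    intro t
    have h := ew_step hη hN (cumLoss f x t.1) (fun θ => f θ t) (fun θ => hf θ t) (x t) (hx t)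
    rwa [cumLoss_succ f x t] at h
  have hsum : ∑ t : Fin n, |ewP η (cumLoss f x t.1) (fun θ => f θ t) - x t|
      ≤ (Real.log (ewW η (cumLoss f x 0)) - Real.log (ewW η (cumLoss f x n))) / η
        + n * (η / 8) := by
    calc ∑ t : Fin n, |ewP η (cumLoss f x t.1) (fun θ => f θ t) - x t|
        ≤ ∑ t : Fin n, ((Real.log (ewW η (cumLoss f x t.1))
            - Real.log (ewW η (cumLoss f x (t.1 + 1)))) / η + η / 8) :=
          Finset.sum_le_sum fun t _ => hstep t
      _ = ∑ u ∈ Finset.range n, ((Real.log (ewW η (cumLoss f x u))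
            - Real.log (ewW η (cumLoss f x (u + 1)))) / η + η / 8) :=
          Fin.sum_univ_eq_sum_range
            (fun u => (Real.log (ewW η (cumLoss f x u))
              - Real.log (ewW η (cumLoss f x (u + 1)))) / η + η / 8) n
      _ = (∑ u ∈ Finset.range n, (Real.log (ewW η (cumLoss f x u))
            - Real.log (ewW η (cumLoss f x (u + 1))))) / η + n * (η / 8) := by
          rw [Finset.sum_add_distrib, Finset.sum_const, Finset.card_range, ← Finset.sum_div]
          simp [nsmul_eq_mul]
      _ = (Real.log (ewW η (cumLoss f x 0)) - Real.log (ewW η (cumLoss f x n))) / η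
            + n * (η / 8) := by
          rw [Finset.sum_range_sub' (fun u => Real.log (ewW η (cumLoss f x u))) n]
  have hG0 : Real.log (ewW η (cumLoss f x 0)) = Real.log N := by
    have h0 : cumLoss f x 0 = fun _ : Fin N => 0 := by
      funext θ; rw [cumLoss]; simp
    rw [h0, ewW]
    simp
  have hGn : -(η * (∑ t, |f θ0 t - x t|)) ≤ Real.log (ewW η (cumLoss f x n)) := by
    rw [← cumLoss_full f x θ0]
    have hsingle : Real.exp (-(η * cumLoss f x n θ0)) ≤ ewW η (cumLoss f x n) :=
      Finset.single_le_sum (fun θ _ => (Real.exp_pos (-(η * cumLoss f x n θ))).le)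
        (Finset.mem_univ θ0)
    calc -(η * cumLoss f x n θ0) = Real.log (Real.exp (-(η * cumLoss f x n θ0))) :=
          (Real.log_exp _).symm
      _ ≤ Real.log (ewW η (cumLoss f x n)) := Real.log_le_log (Real.exp_pos _) hsingle
  have hfinal : (Real.log (ewW η (cumLoss f x 0)) - Real.log (ewW η (cumLoss f x n))) / η
      ≤ (∑ t, |f θ0 t - x t|) + Real.log N / η := by
    rw [hG0]
    have h1 : Real.log N - Real.log (ewW η (cumLoss f x n))
        ≤ Real.log N + η * (∑ t, |f θ0 t - x t|) := by linarith
    calc (Real.log N - Real.log (ewW η (cumLoss f x n))) / η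
        ≤ (Real.log N + η * (∑ t, |f θ0 t - x t|)) / η := div_le_div_of_nonneg_right h1 hη.le
      _ = (∑ t, |f θ0 t - x t|) + Real.log N / η := by
          field_simp
          ring
  calc ∑ t : Fin n, |ewP η (fun θ => ∑ i : Fin t.1,
          |f θ (Fin.castLE t.isLt.le i) - x (Fin.castLE t.isLt.le i)|) (fun θ => f θ t) - x t|
      = ∑ t : Fin n, |ewP η (cumLoss f x t.1) (fun θ => f θ t) - x t| := by
        refine Finset.sum_congr rfl fun t _ => ?_
        congr 1
        rw [show (fun θ => ∑ i : Fin t.1,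
            |f θ (Fin.castLE t.isLt.le i) - x (Fin.castLE t.isLt.le i)|) = cumLoss f x t.1
          from funext fun θ => cumLoss_fin f x t θ]
    _ ≤ _ := hsum
    _ ≤ (∑ t, |f θ0 t - x t|) + Real.log N / η + n * (η / 8) := by linarith

/-- **Theorem 1 (upper bound on the minimax expected regret).**
Target alphabet `X ⊆ [0,1]` (nonempty, measurable), decision space `[0,1]`,
absolute loss.  The side sequence has conditionally independent entries
`S_t ∼ P(·|x_t)`.  A forecaster is a family of measurable maps
`S^t × X^{t-1} → [0,1]`.  If the measurable estimator `x̂ : S → X` satisfies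
`E_S[Σ_t |x̂(S_t) − x_t|] ≤ C_S(n)` for every target sequence, then the minimax
expected regret is at most `√((n/2)·log(N+1)) + min{C_S(n) − L*(n), 0}`. -/
theorem minimax_regret_upper_bound
    {S : Type*} [MeasurableSpace S]
    (n N : ℕ) (hn : 0 < n) (hN : 0 < N)
    (X : Set ℝ) (hXne : X.Nonempty) (hXmeas : MeasurableSet X) (hX01 : X ⊆ Set.Icc 0 1)
    (P : Kernel ℝ S) [IsMarkovKernel P]
    (f : Fin N → Fin n → ℝ) (hf : ∀ θ t, f θ t ∈ Set.Icc (0:ℝ) 1)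
    (xhat : S → ℝ) (hxhat_meas : Measurable xhat) (hxhat_mem : ∀ s, xhat s ∈ X)
    (CS : ℝ)
    (hCS : ∀ x : Fin n → ℝ, (∀ t, x t ∈ X) →
      (∫ s : Fin n → S, (∑ t, |xhat (s t) - x t|) ∂(Measure.pi fun t => P (x t))) ≤ CS) :
    (⨅ F : {F : (t : Fin n) → (Fin (t.1 + 1) → S) → (Fin t.1 → ℝ) → ℝ //
        (∀ t, Measurable (Function.uncurry (F t))) ∧
        (∀ t a b, F t a b ∈ Set.Icc (0:ℝ) 1)},
      ⨆ x : {x : Fin n → ℝ // ∀ t, x t ∈ X},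
        ∫ s : Fin n → S,
          ((∑ t, |F.1 t (fun i => s (Fin.castLE t.isLt i))
              (fun i => x.1 (Fin.castLE t.isLt.le i)) - x.1 t|)
            - ⨅ θ : Fin N, ∑ t, |f θ t - x.1 t|)
          ∂(Measure.pi fun t => P (x.1 t)))
    ≤ Real.sqrt ((n / 2) * Real.log (N + 1))
      + min (CS - ⨅ x : {x : Fin n → ℝ // ∀ t, x t ∈ X}, ⨅ θ : Fin N, ∑ t, |f θ t - x.1 t|) 0 := by
  classical
  obtain ⟨x0, hx0⟩ := hXne
  haveI hXsub : Nonempty {x : Fin n → ℝ // ∀ t, x t ∈ X} := ⟨⟨fun _ => x0, fun _ => hx0⟩⟩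
  haveI hNne : Nonempty (Fin N) := ⟨⟨0, hN⟩⟩
  have habs1 : ∀ a b : ℝ, a ∈ Set.Icc (0:ℝ) 1 → b ∈ Set.Icc (0:ℝ) 1 → |a - b| ≤ 1 :=
    fun a b ha hb => abs_le.mpr ⟨by linarith [ha.1, hb.2], by linarith [ha.2, hb.1]⟩
  -- nonnegativity / upper bound for the best-expert loss
  have hinf_nonneg : ∀ x : {x : Fin n → ℝ // ∀ t, x t ∈ X},
      0 ≤ ⨅ θ : Fin N, ∑ t, |f θ t - x.1 t| :=
    fun x => le_ciInf fun θ => Finset.sum_nonneg fun t _ => abs_nonneg _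
  have hinf_le : ∀ x : {x : Fin n → ℝ // ∀ t, x t ∈ X},
      (⨅ θ : Fin N, ∑ t, |f θ t - x.1 t|) ≤ n := by
    intro x
    refine ciInf_le_of_le (Set.Finite.bddBelow (Set.finite_range _)) ⟨0, hN⟩ ?_
    calc ∑ t, |f ⟨0, hN⟩ t - x.1 t| ≤ ∑ _t : Fin n, (1:ℝ) :=
          Finset.sum_le_sum fun t _ => habs1 _ _ (hf _ t) (hX01 (x.2 t))
      _ = n := by simp
  -- integrability and bounds of the generic integrand
  have hInt : ∀ (F : {F : (t : Fin n) → (Fin (t.1 + 1) → S) → (Fin t.1 → ℝ) → ℝ //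
        (∀ t, Measurable (Function.uncurry (F t))) ∧
        (∀ t a b, F t a b ∈ Set.Icc (0:ℝ) 1)}) (x : {x : Fin n → ℝ // ∀ t, x t ∈ X}),
      Integrable (fun s : Fin n → S => ∑ t, |F.1 t (fun i => s (Fin.castLE t.isLt i))
          (fun i => x.1 (Fin.castLE t.isLt.le i)) - x.1 t|)
        (Measure.pi fun t => P (x.1 t)) := by
    intro F x
    have hmeas : Measurable (fun s : Fin n → S => ∑ t, |F.1 t (fun i => s (Fin.castLE t.isLt i))
        (fun i => x.1 (Fin.castLE t.isLt.le i)) - x.1 t|) := by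
      apply Finset.measurable_sum
      intro t _
      have h1 : Measurable (fun s : Fin n → S =>
          ((fun i => s (Fin.castLE t.isLt i)), (fun i => x.1 (Fin.castLE t.isLt.le i)))) :=
        (measurable_pi_lambda _ fun i => measurable_pi_apply _).prodMk measurable_const
      exact (((F.2.1 t).comp h1).sub measurable_const).abs
    refine (integrable_const (n:ℝ)).mono' hmeas.aestronglyMeasurable (ae_of_all _ fun s => ?_)
    rw [Real.norm_eq_abs, abs_of_nonneg (Finset.sum_nonneg fun t _ => abs_nonneg _)]
    calc (∑ t, |F.1 t (fun i => s (Fin.castLE t.isLt i))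
            (fun i => x.1 (Fin.castLE t.isLt.le i)) - x.1 t|)
        ≤ ∑ _t : Fin n, (1:ℝ) := Finset.sum_le_sum fun t _ =>
          habs1 _ _ (F.2.2 t _ _) (hX01 (x.2 t))
      _ = n := by simp
  -- the sup over x is bounded above by n and below by -n for every forecaster
  have hGub : ∀ (F : {F : (t : Fin n) → (Fin (t.1 + 1) → S) → (Fin t.1 → ℝ) → ℝ //
        (∀ t, Measurable (Function.uncurry (F t))) ∧
        (∀ t a b, F t a b ∈ Set.Icc (0:ℝ) 1)}) (x : {x : Fin n → ℝ // ∀ t, x t ∈ X}),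
      (∫ s : Fin n → S,
          ((∑ t, |F.1 t (fun i => s (Fin.castLE t.isLt i))
              (fun i => x.1 (Fin.castLE t.isLt.le i)) - x.1 t|)
            - ⨅ θ : Fin N, ∑ t, |f θ t - x.1 t|)
          ∂(Measure.pi fun t => P (x.1 t))) ∈ Set.Icc (-(n:ℝ)) n := by
    intro F x
    haveI : IsProbabilityMeasure (Measure.pi fun t => P (x.1 t)) := inferInstance
    rw [integral_sub (hInt F x) (integrable_const _), integral_const]
    simp only [measure_univ, ENNReal.toReal_one, probReal_univ, smul_eq_mul, one_mul]
    constructor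
    · have h1 : 0 ≤ ∫ s : Fin n → S, (∑ t, |F.1 t (fun i => s (Fin.castLE t.isLt i))
          (fun i => x.1 (Fin.castLE t.isLt.le i)) - x.1 t|) ∂(Measure.pi fun t => P (x.1 t)) :=
        integral_nonneg fun s => Finset.sum_nonneg fun t _ => abs_nonneg _
      linarith [hinf_le x]
    · have h1 : (∫ s : Fin n → S, (∑ t, |F.1 t (fun i => s (Fin.castLE t.isLt i))
          (fun i => x.1 (Fin.castLE t.isLt.le i)) - x.1 t|) ∂(Measure.pi fun t => P (x.1 t)))
          ≤ ∫ _s : Fin n → S, (n:ℝ) ∂(Measure.pi fun t => P (x.1 t)) := by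
        refine integral_mono (hInt F x) (integrable_const _) fun s => ?_
        calc (∑ t, |F.1 t (fun i => s (Fin.castLE t.isLt i))
                (fun i => x.1 (Fin.castLE t.isLt.le i)) - x.1 t|)
            ≤ ∑ _t : Fin n, (1:ℝ) := Finset.sum_le_sum fun t _ =>
              habs1 _ _ (F.2.2 t _ _) (hX01 (x.2 t))
          _ = n := by simp
      rw [integral_const] at h1
      simp only [measure_univ, ENNReal.toReal_one, probReal_univ, smul_eq_mul, one_mul] at h1
      linarith [hinf_nonneg x]
  have hbddF : BddBelow (Set.range fun F : {F : (t : Fin n) → (Fin (t.1 + 1) → S) → (Fin t.1 → ℝ) → ℝ //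
        (∀ t, Measurable (Function.uncurry (F t))) ∧
        (∀ t a b, F t a b ∈ Set.Icc (0:ℝ) 1)} =>
      ⨆ x : {x : Fin n → ℝ // ∀ t, x t ∈ X},
        ∫ s : Fin n → S,
          ((∑ t, |F.1 t (fun i => s (Fin.castLE t.isLt i))
              (fun i => x.1 (Fin.castLE t.isLt.le i)) - x.1 t|)
            - ⨅ θ : Fin N, ∑ t, |f θ t - x.1 t|)
          ∂(Measure.pi fun t => P (x.1 t))) := by
    refine ⟨-(n:ℝ), ?_⟩
    rintro _ ⟨F, rfl⟩
    obtain x1 := Classical.arbitrary {x : Fin n → ℝ // ∀ t, x t ∈ X}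
    refine le_ciSup_of_le ⟨(n:ℝ), ?_⟩ x1 (hGub F x1).1
    rintro _ ⟨x, rfl⟩
    exact (hGub F x).2
  have hkey : ∀ (F : {F : (t : Fin n) → (Fin (t.1 + 1) → S) → (Fin t.1 → ℝ) → ℝ //
        (∀ t, Measurable (Function.uncurry (F t))) ∧
        (∀ t a b, F t a b ∈ Set.Icc (0:ℝ) 1)}) (B : ℝ),
      (∀ x : {x : Fin n → ℝ // ∀ t, x t ∈ X},
        (∫ s : Fin n → S,
          ((∑ t, |F.1 t (fun i => s (Fin.castLE t.isLt i))
              (fun i => x.1 (Fin.castLE t.isLt.le i)) - x.1 t|)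
            - ⨅ θ : Fin N, ∑ t, |f θ t - x.1 t|)
          ∂(Measure.pi fun t => P (x.1 t))) ≤ B) →
      (⨅ F : {F : (t : Fin n) → (Fin (t.1 + 1) → S) → (Fin t.1 → ℝ) → ℝ //
        (∀ t, Measurable (Function.uncurry (F t))) ∧
        (∀ t a b, F t a b ∈ Set.Icc (0:ℝ) 1)},
      ⨆ x : {x : Fin n → ℝ // ∀ t, x t ∈ X},
        ∫ s : Fin n → S,
          ((∑ t, |F.1 t (fun i => s (Fin.castLE t.isLt i))
              (fun i => x.1 (Fin.castLE t.isLt.le i)) - x.1 t|)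
            - ⨅ θ : Fin N, ∑ t, |f θ t - x.1 t|)
          ∂(Measure.pi fun t => P (x.1 t))) ≤ B :=
    fun F B hB => ciInf_le_of_le hbddF F (ciSup_le hB)
  set Lstar := ⨅ x : {x : Fin n → ℝ // ∀ t, x t ∈ X}, ⨅ θ : Fin N, ∑ t, |f θ t - x.1 t|
    with hLstar
  have hLstar_le : ∀ x : {x : Fin n → ℝ // ∀ t, x t ∈ X},
      Lstar ≤ ⨅ θ : Fin N, ∑ t, |f θ t - x.1 t| := by
    intro x
    exact ciInf_le ⟨0, by rintro _ ⟨y, rfl⟩; exact hinf_nonneg y⟩ x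
  rcases le_total CS Lstar with hCle | hCge
  · -- use the estimator forecaster
    rw [min_eq_left (by linarith)]
    have hFm : ∀ t : Fin n, Measurable (Function.uncurry
        ((fun t (a : Fin (t.1 + 1) → S) (_ : Fin t.1 → ℝ) => xhat (a (Fin.last t.1))) t)) :=
      fun t => hxhat_meas.comp ((measurable_pi_apply (Fin.last t.1)).comp measurable_fst)
    have hFb : ∀ (t : Fin n) (a : Fin (t.1 + 1) → S) (b : Fin t.1 → ℝ),
        (fun t (a : Fin (t.1 + 1) → S) (_ : Fin t.1 → ℝ) => xhat (a (Fin.last t.1))) t a b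
          ∈ Set.Icc (0:ℝ) 1 := fun t a b => hX01 (hxhat_mem _)
    refine le_trans (hkey ⟨fun t a _ => xhat (a (Fin.last t.1)), hFm, hFb⟩ (CS - Lstar) ?_) ?_
    · intro x
      haveI : IsProbabilityMeasure (Measure.pi fun t => P (x.1 t)) := inferInstance
      have hidx : ∀ t : Fin n, Fin.castLE t.isLt (Fin.last t.1) = t := fun t => Fin.ext (by simp)
      have hI : Integrable (fun s : Fin n → S => ∑ t, |xhat (s t) - x.1 t|)
          (Measure.pi fun t => P (x.1 t)) := by
        have hmeas : Measurable (fun s : Fin n → S => ∑ t, |xhat (s t) - x.1 t|) :=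
          Finset.measurable_sum _ fun t _ =>
            ((hxhat_meas.comp (measurable_pi_apply t)).sub measurable_const).abs
        refine (integrable_const (n:ℝ)).mono' hmeas.aestronglyMeasurable (ae_of_all _ fun s => ?_)
        rw [Real.norm_eq_abs, abs_of_nonneg (Finset.sum_nonneg fun t _ => abs_nonneg _)]
        calc (∑ t, |xhat (s t) - x.1 t|) ≤ ∑ _t : Fin n, (1:ℝ) :=
            Finset.sum_le_sum fun t _ => habs1 _ _ (hX01 (hxhat_mem _)) (hX01 (x.2 t))
          _ = n := by simp
      have hconv : (fun s : Fin n → S =>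
          ((∑ t, |xhat (s (Fin.castLE t.isLt (Fin.last t.1))) - x.1 t|)
            - ⨅ θ : Fin N, ∑ t, |f θ t - x.1 t|))
          = fun s : Fin n → S => ((∑ t, |xhat (s t) - x.1 t|)
            - ⨅ θ : Fin N, ∑ t, |f θ t - x.1 t|) := by
        funext s
        simp only [hidx]
      show (∫ s : Fin n → S,
          ((∑ t, |xhat (s (Fin.castLE t.isLt (Fin.last t.1))) - x.1 t|)
            - ⨅ θ : Fin N, ∑ t, |f θ t - x.1 t|)
          ∂(Measure.pi fun t => P (x.1 t))) ≤ CS - Lstar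
      rw [hconv, integral_sub hI (integrable_const _), integral_const]
      simp only [measure_univ, ENNReal.toReal_one, probReal_univ, smul_eq_mul, one_mul]
      have h1 := hCS x.1 x.2
      have h2 := hLstar_le x
      linarith
    · linarith [Real.sqrt_nonneg ((n / 2 : ℝ) * Real.log (N + 1))]
  · -- use the exponential weights forecaster
    rw [min_eq_right (by linarith)]
    set η := Real.sqrt (8 * Real.log (N + 1) / n) with hηdef
    have hn' : (0:ℝ) < n := by exact_mod_cast hn
    have hN1 : (1:ℝ) ≤ N := by exact_mod_cast hN
    have hc : 0 < Real.log ((N:ℝ) + 1) := Real.log_pos (by linarith)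
    have hη : 0 < η := Real.sqrt_pos.mpr (by positivity)
    have hη2 : η ^ 2 = 8 * Real.log ((N:ℝ) + 1) / n := Real.sq_sqrt (by positivity)
    have hη2' : η ^ 2 * n = 8 * Real.log ((N:ℝ) + 1) := by
      rw [hη2]; field_simp
    have hFm : ∀ t : Fin n, Measurable (Function.uncurry
        ((fun (t : Fin n) (_ : Fin (t.1 + 1) → S) (b : Fin t.1 → ℝ) =>
          ewP η (fun θ => ∑ i, |f θ (Fin.castLE t.isLt.le i) - b i|) (fun θ => f θ t)) t)) := by
      intro t
      simp only [ewP, ewW, Function.uncurry]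
      apply Measurable.div
      · apply Finset.measurable_sum
        intro θ _
        apply Measurable.mul _ measurable_const
        apply Measurable.exp
        apply Measurable.neg
        apply Measurable.const_mul
        apply Finset.measurable_sum
        intro i _
        exact (measurable_const.sub ((measurable_pi_apply i).comp measurable_snd)).abs
      · apply Finset.measurable_sum
        intro θ _
        apply Measurable.exp
        apply Measurable.neg
        apply Measurable.const_mul
        apply Finset.measurable_sum
        intro i _
        exact (measurable_const.sub ((measurable_pi_apply i).comp measurable_snd)).abs
    have hFb : ∀ (t : Fin n) (a : Fin (t.1 + 1) → S) (b : Fin t.1 → ℝ),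
        (fun (t : Fin n) (_ : Fin (t.1 + 1) → S) (b : Fin t.1 → ℝ) =>
          ewP η (fun θ => ∑ i, |f θ (Fin.castLE t.isLt.le i) - b i|) (fun θ => f θ t)) t a b
          ∈ Set.Icc (0:ℝ) 1 := fun t a b => ewP_mem hN _ _ fun θ => hf θ t
    refine le_trans (hkey ⟨fun t _ b =>
      ewP η (fun θ => ∑ i, |f θ (Fin.castLE t.isLt.le i) - b i|) (fun θ => f θ t), hFm, hFb⟩
      (Real.sqrt ((n / 2 : ℝ) * Real.log (N + 1))) ?_) (by linarith)
    intro x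
    haveI : IsProbabilityMeasure (Measure.pi fun t => P (x.1 t)) := inferInstance
    show (∫ _s : Fin n → S,
        ((∑ t, |ewP η (fun θ => ∑ i, |f θ (Fin.castLE t.isLt.le i)
            - x.1 (Fin.castLE t.isLt.le i)|) (fun θ => f θ t) - x.1 t|)
          - ⨅ θ : Fin N, ∑ t, |f θ t - x.1 t|)
        ∂(Measure.pi fun t => P (x.1 t))) ≤ Real.sqrt ((n / 2 : ℝ) * Real.log (N + 1))
    rw [integral_const]
    simp only [measure_univ, ENNReal.toReal_one, probReal_univ, smul_eq_mul, one_mul]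
    obtain ⟨θ0, hθ0⟩ := Finite.exists_min fun θ : Fin N => ∑ t, |f θ t - x.1 t|
    have hθ0inf : (∑ t, |f θ0 t - x.1 t|) ≤ ⨅ θ : Fin N, ∑ t, |f θ t - x.1 t| := le_ciInf hθ0
    have hreg := ew_regret n N hN η hη f x.1 hf (fun t => hX01 (x.2 t)) θ0
    have hlogN : Real.log N ≤ Real.log ((N:ℝ) + 1) :=
      Real.log_le_log (by linarith) (by linarith)
    have hdiv : Real.log N / η ≤ Real.log ((N:ℝ) + 1) / η :=
      div_le_div_of_nonneg_right hlogN hη.le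
    have heq : Real.log ((N:ℝ) + 1) / η + n * (η / 8) = n * η / 4 := by
      rw [div_add' _ _ _ hη.ne']
      rw [div_eq_div_iff hη.ne' (by norm_num : (4:ℝ) ≠ 0)]
      linarith [hη2']
    have hsqrt : Real.sqrt ((n / 2 : ℝ) * Real.log (N + 1)) = n * η / 4 := by
      have h4 : ((n:ℝ) * η / 4) ^ 2 = ((n:ℝ) / 2) * Real.log ((N:ℝ) + 1) := by
        linear_combination ((n:ℝ) / 16) * hη2'
      rw [show ((n:ℝ) / 2) * Real.log ((N:ℝ) + 1) = ((n:ℝ) * η / 4) ^ 2 from h4.symm,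
        Real.sqrt_sq (by positivity)]
    rw [hsqrt]
    have hchain : (∑ t, |ewP η (fun θ => ∑ i, |f θ (Fin.castLE t.isLt.le i)
        - x.1 (Fin.castLE t.isLt.le i)|) (fun θ => f θ t) - x.1 t|)
        ≤ (⨅ θ : Fin N, ∑ t, |f θ t - x.1 t|) + n * η / 4 := by
      calc _ ≤ (∑ t, |f θ0 t - x.1 t|) + Real.log N / η + n * (η / 8) := hreg
        _ ≤ (⨅ θ : Fin N, ∑ t, |f θ t - x.1 t|) + Real.log ((N:ℝ) + 1) / η + n * (η / 8) := by
            linarith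
        _ = (⨅ θ : Fin N, ∑ t, |f θ t - x.1 t|) + n * η / 4 := by rw [add_assoc, heq]
    linarith
end

section
/- Let the target alphabet be X = {0,1}, the decision space D = [0,1], and the loss the absolute loss. Let P be a Markov kernel from {0,1} to a measurable space S and define ξ* = inf over measurable maps g : S → [0,1] of E|g(S_1) − Z|, where Z ∼ Bernoulli(1/2) and S_1 | Z ∼ P(·|Z). Then for ANY class of N expert prediction sequences f^θ ∈ [0,1]^n, the minimax expected regret satisfies R(n) ≥ n·ξ* − E[ min_θ Σ_{t=1}^n |f^θ_t − Z_t| ], where Z_1,…,Z_n are i.i.d. Bernoulli(1/2). -/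
open MeasureTheory ProbabilityTheory

/-- The real value of a binary target symbol. -/
noncomputable def b2r (b : Bool) : ℝ := if b then 1 else 0

private lemma integrable_of_abs_le {α : Type*} [MeasurableSpace α] {μ : Measure α}
    [IsFiniteMeasure μ] {h : α → ℝ} (hm : Measurable h) {C : ℝ} (hb : ∀ a, |h a| ≤ C) :
    Integrable h μ :=
  (integrable_const C).mono' hm.aestronglyMeasurable
    (Filter.Eventually.of_forall fun a => by simpa [Real.norm_eq_abs] using hb a)

private lemma regret_core {S : Type*} [MeasurableSpace S] {m : ℕ}
    (P : Kernel Bool S) [IsMarkovKernel P] (ξ : ℝ)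
    (hξ : ξ = ⨅ g : {g : S → ℝ // Measurable g ∧ ∀ s, g s ∈ Set.Icc (0:ℝ) 1},
      ((1/2) * ∫ s, |g.1 s - 1| ∂(P true) + (1/2) * ∫ s, |g.1 s - 0| ∂(P false)))
    (t : Fin (m+1)) (x : Fin (m+1) → Bool)
    (F : (Fin (t.1+1) → S) → ℝ) (hFm : Measurable F) (hFb : ∀ a, F a ∈ Set.Icc (0:ℝ) 1) :
    2 * ξ ≤
      (∫ s : Fin (m+1) → S, |F (fun i => s (Fin.castLE t.isLt i)) - 1|
          ∂(Measure.pi fun j => P (Function.update x t true j)))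
      + (∫ s : Fin (m+1) → S, |F (fun i => s (Fin.castLE t.isLt i)) - 0|
          ∂(Measure.pi fun j => P (Function.update x t false j))) := by
  classical
  set e := MeasurableEquiv.piFinSuccAbove (fun _ : Fin (m+1) => S) t with he
  set ρ : Measure (Fin m → S) := Measure.pi fun j => P (x (t.succAbove j)) with hρ
  set H : (Fin (m+1) → S) → ℝ := fun s => F (fun i => s (Fin.castLE t.isLt i)) with hH
  have hHm : Measurable H := hFm.comp (measurable_pi_lambda _ fun i => measurable_pi_apply _)
  set K : S × (Fin m → S) → ℝ := fun z => H (e.symm z) with hK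
  have hKm : Measurable K := hHm.comp e.symm.measurable
  have hK01 : ∀ z, K z ∈ Set.Icc (0:ℝ) 1 := fun z => hFb _
  set g : S → ℝ := fun u => ∫ v, K (u, v) ∂ρ with hg
  have hgm : Measurable g := (hKm.stronglyMeasurable.integral_prod_right').measurable
  have hKint : ∀ u, Integrable (fun v => K (u, v)) ρ := fun u =>
    integrable_of_abs_le (hKm.comp measurable_prodMk_left) (C := 1)
      (fun v => abs_le.2 ⟨by linarith [(hK01 (u, v)).1], (hK01 (u, v)).2⟩)
  have hg01 : ∀ u, g u ∈ Set.Icc (0:ℝ) 1 := by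
    intro u
    refine ⟨integral_nonneg fun v => (hK01 _).1, ?_⟩
    calc g u ≤ ∫ _v, (1:ℝ) ∂ρ := integral_mono (hKint u) (integrable_const 1) fun v => (hK01 _).2
      _ = 1 := by simp
  have hptwise : ∀ (b : ℝ) (u : S), |g u - b| ≤ ∫ v, |K (u, v) - b| ∂ρ := by
    intro b u
    have h1 : g u - b = ∫ v, (K (u, v) - b) ∂ρ := by
      rw [integral_sub (hKint u) (integrable_const b), integral_const]; simp [hg]
    rw [h1]
    simpa [Real.norm_eq_abs] using norm_integral_le_integral_norm (μ := ρ)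
      (fun v => K (u, v) - b)
  have key : ∀ (c : Bool) (b : ℝ), |b| ≤ 1 →
      ∫ u, |g u - b| ∂(P c)
        ≤ ∫ s, |H s - b| ∂(Measure.pi fun j => P (Function.update x t c j)) := by
    intro c b hb
    have hb' := abs_le.1 hb
    have mp := measurePreserving_piFinSuccAbove (fun j => P (Function.update x t c j)) t
    have h2 : ∀ j, Function.update x t c (t.succAbove j) = x (t.succAbove j) := fun j =>
      Function.update_of_ne (Fin.succAbove_ne t j) _ _
    simp only [Function.update_self, h2] at mp
    rw [← hρ, ← he] at mp
    have habs : ∀ z : S × (Fin m → S), |K z - b| ≤ 2 := by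
      intro z
      have h := hK01 z
      exact abs_le.2 ⟨by linarith [h.1], by linarith [h.2]⟩
    have habs' : ∀ z : S × (Fin m → S), |(|K z - b|)| ≤ 2 := by
      intro z; rw [abs_abs]; exact habs z
    have hKbint : Integrable (fun z => |K z - b|) ((P c).prod ρ) :=
      integrable_of_abs_le ((hKm.sub measurable_const).abs) habs'
    have hinner_meas : Measurable (fun u => ∫ v, |K (u, v) - b| ∂ρ) :=
      (((hKm.sub measurable_const).abs).stronglyMeasurable.integral_prod_right').measurable
    have hinner_bdd : ∀ u, |∫ v, |K (u, v) - b| ∂ρ| ≤ 2 := by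
      intro u
      rw [abs_of_nonneg (integral_nonneg fun v => abs_nonneg _)]
      calc ∫ v, |K (u, v) - b| ∂ρ ≤ ∫ _v, (2:ℝ) ∂ρ := by
            refine integral_mono ?_ (integrable_const 2) fun v => habs _
            exact integrable_of_abs_le
              (((hKm.comp measurable_prodMk_left).sub measurable_const).abs)
              (fun v => habs' (u, v))
        _ = 2 := by simp
    calc ∫ u, |g u - b| ∂(P c)
        ≤ ∫ u, (∫ v, |K (u, v) - b| ∂ρ) ∂(P c) := by
          refine integral_mono ?_ ?_ (hptwise b)
          · refine integrable_of_abs_le ((hgm.sub measurable_const).abs) (C := 2) ?_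
            intro u
            rw [abs_abs]
            have h := hg01 u
            exact abs_le.2 ⟨by linarith [h.1], by linarith [h.2]⟩
          · exact integrable_of_abs_le hinner_meas hinner_bdd
      _ = ∫ z, |K z - b| ∂((P c).prod ρ) := (integral_prod _ hKbint).symm
      _ = ∫ s, |H s - b| ∂(Measure.pi fun j => P (Function.update x t c j)) := by
          rw [← mp.integral_comp e.measurableEmbedding (fun z => |K z - b|)]
          refine integral_congr_ae (Filter.Eventually.of_forall fun s => ?_)
          simp only [hK, MeasurableEquiv.symm_apply_apply]
  have hgle : ξ ≤ 1/2 * ∫ u, |g u - 1| ∂(P true) + 1/2 * ∫ u, |g u - 0| ∂(P false) := by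
    rw [hξ]
    have hbdd : BddBelow (Set.range
        (fun g' : {g : S → ℝ // Measurable g ∧ ∀ s, g s ∈ Set.Icc (0:ℝ) 1} =>
          ((1/2) * ∫ s, |g'.1 s - 1| ∂(P true) + (1/2) * ∫ s, |g'.1 s - 0| ∂(P false)))) := by
      refine ⟨0, ?_⟩
      intro y hy
      obtain ⟨g', rfl⟩ := hy
      have h1 : (0:ℝ) ≤ ∫ s, |g'.1 s - 1| ∂(P true) := integral_nonneg fun s => abs_nonneg _
      have h2 : (0:ℝ) ≤ ∫ s, |g'.1 s - 0| ∂(P false) := integral_nonneg fun s => abs_nonneg _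
      dsimp only
      linarith
    exact ciInf_le hbdd ⟨g, hgm, hg01⟩
  have k1 := key true 1 (by norm_num)
  have k0 := key false 0 (by norm_num)
  simp only [hH] at k1 k0
  linarith

/-- **General lower bound on the minimax expected regret (binary targets).**
Target alphabet `{0,1}`, decision space `[0,1]`, absolute loss, side information
`S_t ∼ P(·|x_t)` conditionally independent.  With
`ξ* = inf_{g : S → [0,1] measurable} E|g(S_1) − Z|` for `Z ∼ Ber(1/2)`,
`S_1 | Z ∼ P(·|Z)`, for ANY class of `N` expert sequences in `[0,1]^n`:
`R(n) ≥ n·ξ* − E[min_θ Σ_t |f^θ_t − Z_t|]`, `Z_t` i.i.d. `Ber(1/2)`. -/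
theorem minimax_regret_general_lower_bound
    {S : Type*} [MeasurableSpace S]
    (n N : ℕ) (hn : 0 < n) (hN : 0 < N)
    (P : Kernel Bool S) [IsMarkovKernel P]
    (f : Fin N → Fin n → ℝ) (hf : ∀ θ t, f θ t ∈ Set.Icc (0:ℝ) 1)
    (ξ : ℝ)
    (hξ : ξ = ⨅ g : {g : S → ℝ // Measurable g ∧ ∀ s, g s ∈ Set.Icc (0:ℝ) 1},
      ((1/2) * ∫ s, |g.1 s - 1| ∂(P true) + (1/2) * ∫ s, |g.1 s - 0| ∂(P false))) :
    n * ξ - (1/2)^n * ∑ x : Fin n → Bool, (⨅ θ : Fin N, ∑ t, |f θ t - b2r (x t)|)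
    ≤ ⨅ F : {F : (t : Fin n) → (Fin (t.1 + 1) → S) → (Fin t.1 → Bool) → ℝ //
        (∀ t, Measurable (Function.uncurry (F t))) ∧
        (∀ t a b, F t a b ∈ Set.Icc (0:ℝ) 1)},
      ⨆ x : Fin n → Bool,
        ∫ s : Fin n → S,
          ((∑ t, |F.1 t (fun i => s (Fin.castLE t.isLt i))
              (fun i => x (Fin.castLE t.isLt.le i)) - b2r (x t)|)
            - ⨅ θ : Fin N, ∑ t, |f θ t - b2r (x t)|)
          ∂(Measure.pi fun t => P (x t)) := by
  classical
  obtain ⟨m, rfl⟩ : ∃ m, n = m + 1 := ⟨n - 1, (Nat.succ_pred_eq_of_pos hn).symm⟩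
  have hne : Nonempty {F : (t : Fin (m+1)) → (Fin (t.1 + 1) → S) → (Fin t.1 → Bool) → ℝ //
        (∀ t, Measurable (Function.uncurry (F t))) ∧
        (∀ t a b, F t a b ∈ Set.Icc (0:ℝ) 1)} :=
    ⟨⟨fun _ _ _ => 1/2, fun t => measurable_const,
      fun t a b => ⟨by norm_num, by norm_num⟩⟩⟩
  refine le_ciInf ?_
  rintro ⟨F, hFmeas, hFmem⟩
  dsimp only
  -- basic measurability / integrability facts
  have hFm' : ∀ (t : Fin (m+1)) (xp : Fin t.1 → Bool),
      Measurable (fun a : Fin (t.1+1) → S => F t a xp) := fun t xp =>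
    (hFmeas t).comp (measurable_id.prodMk measurable_const)
  have hb2r : ∀ b, |b2r b| ≤ 1 := by intro b; cases b <;> simp [b2r]
  set G : (Fin (m+1) → Bool) → ℝ := fun x =>
    ∫ s : Fin (m+1) → S,
      ((∑ t, |F t (fun i => s (Fin.castLE t.isLt i))
          (fun i => x (Fin.castLE t.isLt.le i)) - b2r (x t)|)
        - ⨅ θ : Fin N, ∑ t, |f θ t - b2r (x t)|)
      ∂(Measure.pi fun t => P (x t)) with hG
  set A : (Fin (m+1) → Bool) → Fin (m+1) → ℝ := fun x t =>
    ∫ s : Fin (m+1) → S, |F t (fun i => s (Fin.castLE t.isLt i))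
        (fun i => x (Fin.castLE t.isLt.le i)) - b2r (x t)|
      ∂(Measure.pi fun j => P (x j)) with hA
  set Inf : (Fin (m+1) → Bool) → ℝ := fun x => ⨅ θ : Fin N, ∑ t, |f θ t - b2r (x t)| with hInf
  have hterm_meas : ∀ (x : Fin (m+1) → Bool) (t : Fin (m+1)),
      Measurable (fun s : Fin (m+1) → S => |F t (fun i => s (Fin.castLE t.isLt i))
        (fun i => x (Fin.castLE t.isLt.le i)) - b2r (x t)|) := fun x t =>
    (((hFm' t _).comp (measurable_pi_lambda _ fun i => measurable_pi_apply _)).sub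
      measurable_const).abs
  have hterm_bdd : ∀ (x : Fin (m+1) → Bool) (t : Fin (m+1)) (s : Fin (m+1) → S),
      |(|F t (fun i => s (Fin.castLE t.isLt i))
        (fun i => x (Fin.castLE t.isLt.le i)) - b2r (x t)|)| ≤ 2 := by
    intro x t s
    rw [abs_abs]
    have h1 := hFmem t (fun i => s (Fin.castLE t.isLt i)) (fun i => x (Fin.castLE t.isLt.le i))
    have h2 := abs_le.1 (hb2r (x t))
    exact abs_le.2 ⟨by linarith [h1.1], by linarith [h1.2]⟩
  have hterm_int : ∀ (x : Fin (m+1) → Bool) (t : Fin (m+1)),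
      Integrable (fun s : Fin (m+1) → S => |F t (fun i => s (Fin.castLE t.isLt i))
        (fun i => x (Fin.castLE t.isLt.le i)) - b2r (x t)|)
        (Measure.pi fun j => P (x j)) := fun x t =>
    integrable_of_abs_le (hterm_meas x t) (hterm_bdd x t)
  have hG_eq : ∀ x, G x = (∑ t, A x t) - Inf x := by
    intro x
    simp only [hG, hA, hInf]
    rw [integral_sub (integrable_finset_sum _ fun t _ => hterm_int x t) (integrable_const _),
      integral_finset_sum _ fun t _ => hterm_int x t, integral_const]
    simp
  -- the key pair inequality
  have hpair : ∀ (t : Fin (m+1)) (x : Fin (m+1) → Bool),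
      2 * ξ ≤ A (Function.update x t true) t + A (Function.update x t false) t := by
    intro t x
    have hcore := regret_core P ξ hξ t x
      (fun a => F t a (fun i => x (Fin.castLE t.isLt.le i))) (hFm' t _)
      (fun a => hFmem t a _)
    have hAc : ∀ c : Bool, A (Function.update x t c) t =
        ∫ s : Fin (m+1) → S, |F t (fun i => s (Fin.castLE t.isLt i))
          (fun i => x (Fin.castLE t.isLt.le i)) - b2r c|
        ∂(Measure.pi fun j => P (Function.update x t c j)) := by
      intro c
      have hp : (fun i : Fin t.1 => Function.update x t c (Fin.castLE t.isLt.le i))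
          = fun i => x (Fin.castLE t.isLt.le i) := by
        funext i
        refine Function.update_of_ne ?_ _ _
        intro hEq
        have hco := congrArg Fin.val hEq
        simp only [Fin.coe_castLE] at hco
        omega
      simp only [hA, Function.update_self, hp]
    rw [hAc true, hAc false, show b2r true = 1 by simp [b2r], show b2r false = 0 by simp [b2r]]
    exact hcore
  -- sum over x for a fixed t
  have hcard : (Finset.univ : Finset (Fin (m+1) → Bool)).card = 2^(m+1) := by
    simp [Finset.card_univ]
  have hsumt : ∀ t : Fin (m+1), (2:ℝ)^(m+1) * (2 * ξ) ≤ 2 * ∑ x, A x t := by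
    intro t
    set flip : (Fin (m+1) → Bool) → Fin (m+1) → Bool :=
      fun y => Function.update y t (!(y t)) with hflip
    have hinv : Function.Involutive flip := by
      intro y; funext j
      by_cases hj : j = t
      · subst hj
        simp [hflip, Function.update_self]
      · simp [hflip, Function.update_of_ne hj]
    have hsum_flip : ∑ x, A (flip x) t = ∑ x, A x t :=
      Fintype.sum_bijective flip hinv.bijective _ _ (fun x => rfl)
    have hpair' : ∀ x, 2 * ξ ≤ A x t + A (flip x) t := by
      intro x
      have h := hpair t x
      cases hc : x t
      · have h1 : Function.update x t false = x := by rw [← hc]; exact Function.update_eq_self t x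
        have h2 : flip x = Function.update x t true := by rw [hflip]; simp [hc]
        rw [h1, ← h2] at h
        linarith
      · have h1 : Function.update x t true = x := by rw [← hc]; exact Function.update_eq_self t x
        have h2 : flip x = Function.update x t false := by rw [hflip]; simp [hc]
        rw [h1, ← h2] at h
        linarith
    calc (2:ℝ)^(m+1) * (2 * ξ) = ∑ _x : Fin (m+1) → Bool, 2 * ξ := by
          rw [Finset.sum_const, hcard, nsmul_eq_mul]
          push_cast
          ring
      _ ≤ ∑ x, (A x t + A (flip x) t) := Finset.sum_le_sum fun x _ => hpair' x
      _ = 2 * ∑ x, A x t := by rw [Finset.sum_add_distrib, hsum_flip]; ring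
  have hsumA : (↑(m+1) : ℝ) * (2:ℝ)^(m+1) * ξ ≤ ∑ x, ∑ t, A x t := by
    rw [Finset.sum_comm]
    calc (↑(m+1) : ℝ) * (2:ℝ)^(m+1) * ξ = ∑ _t : Fin (m+1), (2:ℝ)^(m+1) * ξ := by
          rw [Finset.sum_const, Finset.card_univ, Fintype.card_fin, nsmul_eq_mul]
          ring
      _ ≤ ∑ t, ∑ x, A x t := Finset.sum_le_sum fun t _ => by linarith [hsumt t]
  -- relate sup to average
  have hpos : (0:ℝ) < (1/2:ℝ)^(m+1) := by positivity
  have h2pow : (1/2:ℝ)^(m+1) * (2:ℝ)^(m+1) = 1 := by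
    rw [← mul_pow]; norm_num
  have hbddG : BddAbove (Set.range G) := Set.Finite.bddAbove (Set.finite_range G)
  have hsum_le : ∑ x, G x ≤ (2:ℝ)^(m+1) * ⨆ y, G y := by
    calc ∑ x, G x ≤ ∑ _x : Fin (m+1) → Bool, ⨆ y, G y :=
          Finset.sum_le_sum fun x _ => le_ciSup hbddG x
      _ = (2:ℝ)^(m+1) * ⨆ y, G y := by
          rw [Finset.sum_const, hcard, nsmul_eq_mul]
          push_cast
          ring
  have e1' : (1/2:ℝ)^(m+1) * ∑ x, G x
      = (1/2:ℝ)^(m+1) * (∑ x, ∑ t, A x t) - (1/2:ℝ)^(m+1) * ∑ x, Inf x := by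
    have e1 : ∑ x, G x = (∑ x, ∑ t, A x t) - ∑ x, Inf x := by
      rw [← Finset.sum_sub_distrib]
      exact Finset.sum_congr rfl fun x _ => hG_eq x
    rw [e1]; ring
  have e2 : (↑(m+1) : ℝ) * ξ ≤ (1/2:ℝ)^(m+1) * ∑ x, ∑ t, A x t := by
    have h3 := mul_le_mul_of_nonneg_left hsumA hpos.le
    calc (↑(m+1) : ℝ) * ξ
        = ((1/2:ℝ)^(m+1) * (2:ℝ)^(m+1)) * ((↑(m+1) : ℝ) * ξ) := by rw [h2pow]; ring
      _ = (1/2:ℝ)^(m+1) * ((↑(m+1) : ℝ) * (2:ℝ)^(m+1) * ξ) := by ring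
      _ ≤ (1/2:ℝ)^(m+1) * ∑ x, ∑ t, A x t := h3
  have e3 : (1/2:ℝ)^(m+1) * ∑ x, G x ≤ ⨆ y, G y := by
    calc (1/2:ℝ)^(m+1) * ∑ x, G x ≤ (1/2:ℝ)^(m+1) * ((2:ℝ)^(m+1) * ⨆ y, G y) :=
          mul_le_mul_of_nonneg_left hsum_le hpos.le
      _ = ⨆ y, G y := by rw [← mul_assoc, h2pow, one_mul]
  linarith
end

section
/- Upper bound for the Gaussian channel: let the target alphabet be {0,1}, the decision space [0,1], the loss the absolute loss, and let the side information be S_t = x_t + N_t with N_t i.i.d. N(0,σ²), σ > 0. Let F be a class of N expert sequences in [0,1]^n whose best worst-case cumulative loss grows linearly, L*(n) = inf_{x ∈ {0,1}^n} min_θ Σ_{t=1}^n |f^θ_t − x_t| = c_f·n. Then the minimax expected regret satisfies R(n) ≤ √((n/2)·log(N+1)) + min{ 0, n·(Φ(−1/(2σ)) − c_f) }, where Φ is the standard normal cumulative distribution function. -/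
open MeasureTheory ProbabilityTheory

/-- The standard normal cumulative distribution function
`Φ(z) = (1/√(2π)) ∫_{−∞}^{z} e^{−t²/2} dt`. -/
noncomputable def stdNormalCDF (z : ℝ) : ℝ :=
  ∫ t in Set.Iic z, Real.exp (-t ^ 2 / 2) / Real.sqrt (2 * Real.pi)

section Aux

lemma key_scalar {m : ℝ} (hm0 : 0 ≤ m) (hm1 : m ≤ 1) {s : ℝ} (hs : s ≤ 0) :
    Real.log (1 - m + m * Real.exp s) ≤ s * m + s ^ 2 / 8 := by
  set d : ℝ → ℝ := fun t => 1 - m + m * Real.exp t with hd_def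
  have hd : ∀ t, 0 < d t := by
    intro t
    rcases eq_or_lt_of_le hm0 with h | h
    · simp [hd_def, ← h]
    · have : 0 < m * Real.exp t := mul_pos h (Real.exp_pos t)
      simp only [hd_def]; linarith
  have hd_deriv : ∀ t, HasDerivAt d (m * Real.exp t) t := by
    intro t
    exact ((Real.hasDerivAt_exp t).const_mul m).const_add (1 - m)
  set g : ℝ → ℝ := fun t => m + t / 4 - m * Real.exp t / d t with hg_def
  have hg_deriv : ∀ t, HasDerivAt g (1 / 4 - m * Real.exp t * (1 - m) / (d t) ^ 2) t := by
    intro t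
    have h1 : HasDerivAt (fun t => m + t / 4) (1 / 4) t := by
      simpa using ((hasDerivAt_id t).div_const 4).const_add m
    have h2 : HasDerivAt (fun t => m * Real.exp t / d t)
        ((m * Real.exp t * d t - m * Real.exp t * (m * Real.exp t)) / (d t) ^ 2) t :=
      ((Real.hasDerivAt_exp t).const_mul m).div (hd_deriv t) (ne_of_gt (hd t))
    have := h1.sub h2
    have hE : m * Real.exp t * d t - m * Real.exp t * (m * Real.exp t)
        = m * Real.exp t * (1 - m) := by simp only [hd_def]; ring
    rw [hE] at this
    exact this
  have hg_mono : Monotone g := by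
    apply monotone_of_deriv_nonneg
    · exact fun t => (hg_deriv t).differentiableAt
    · intro t
      rw [(hg_deriv t).deriv]
      have ha : 0 ≤ 1 - m := by linarith
      have hb : 0 ≤ m * Real.exp t := mul_nonneg hm0 (Real.exp_pos t).le
      have hdt : d t = 1 - m + m * Real.exp t := rfl
      have hsq : m * Real.exp t * (1 - m) ≤ (d t) ^ 2 / 4 := by
        rw [hdt]; nlinarith [sq_nonneg ((1 - m) - m * Real.exp t)]
      have hpos : 0 < (d t) ^ 2 := pow_pos (hd t) 2
      have hdiv : m * Real.exp t * (1 - m) / (d t) ^ 2 ≤ 1 / 4 := by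
        rw [div_le_iff₀ hpos]; linarith
      linarith
  have hg0 : g 0 = 0 := by
    simp only [hg_def, hd_def, Real.exp_zero, mul_one]
    have : 1 - m + m = 1 := by ring
    rw [this]
    ring
  set φ : ℝ → ℝ := fun t => t * m + t ^ 2 / 8 - Real.log (d t) with hφ_def
  have hφ_deriv : ∀ t, HasDerivAt φ (g t) t := by
    intro t
    have h1 : HasDerivAt (fun t : ℝ => t * m) m t := by
      simpa using (hasDerivAt_id t).mul_const m
    have h2 : HasDerivAt (fun t : ℝ => t ^ 2 / 8) (t / 4) t := by
      exact ((hasDerivAt_pow 2 t).div_const 8).congr_deriv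
        (by rw [show (2:ℕ) - 1 = 1 from rfl]; push_cast; ring)
    have h3 : HasDerivAt (fun t => Real.log (d t)) (m * Real.exp t / d t) t :=
      (hd_deriv t).log (ne_of_gt (hd t))
    exact (h1.add h2).sub h3
  have hφdiff : Differentiable ℝ φ := fun t => (hφ_deriv t).differentiableAt
  have hφ_anti : AntitoneOn φ (Set.Iic 0) := by
    refine antitoneOn_of_deriv_nonpos (convex_Iic 0) hφdiff.continuous.continuousOn
      (fun t _ => hφdiff.differentiableAt.differentiableWithinAt) ?_
    intro t ht
    rw [interior_Iic] at ht
    rw [(hφ_deriv t).deriv]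
    calc g t ≤ g 0 := hg_mono ht.le
      _ = 0 := hg0
  have hφ0 : φ 0 = 0 := by
    simp only [hφ_def, hd_def, Real.exp_zero, mul_one]
    have : 1 - m + m = 1 := by ring
    rw [this]
    simp
  have := hφ_anti (Set.mem_Iic.mpr hs) (Set.mem_Iic.mpr le_rfl) hs
  rw [hφ0] at this
  have h0 : 0 ≤ φ s := this
  simp only [hφ_def] at h0
  linarith

lemma hoeffding_sum {N : ℕ} (q ℓv : Fin N → ℝ) (hq : ∀ θ, 0 ≤ q θ)
    (hq1 : ∑ θ, q θ = 1) (hℓ : ∀ θ, ℓv θ ∈ Set.Icc (0:ℝ) 1) {η : ℝ} (hη : 0 ≤ η) :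
    Real.log (∑ θ, q θ * Real.exp (-η * ℓv θ))
      ≤ -η * (∑ θ, q θ * ℓv θ) + η ^ 2 / 8 := by
  set m : ℝ := ∑ θ, q θ * ℓv θ with hm_def
  have hm0 : 0 ≤ m := Finset.sum_nonneg fun θ _ => mul_nonneg (hq θ) (hℓ θ).1
  have hm1 : m ≤ 1 := by
    calc m ≤ ∑ θ, q θ := Finset.sum_le_sum fun θ _ => by
            nlinarith [(hℓ θ).2, hq θ]
      _ = 1 := hq1
  have hpt : ∀ θ, Real.exp (-η * ℓv θ) ≤ 1 - ℓv θ + ℓv θ * Real.exp (-η) := by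
    intro θ
    have hcx := convexOn_exp.2 (Set.mem_univ (0:ℝ)) (Set.mem_univ (-η))
      (by linarith [(hℓ θ).1, (hℓ θ).2] : (0:ℝ) ≤ 1 - ℓv θ) (hℓ θ).1 (by ring)
    simpa [mul_comm] using hcx
  have hS : ∑ θ, q θ * Real.exp (-η * ℓv θ) ≤ 1 - m + m * Real.exp (-η) := by
    calc ∑ θ, q θ * Real.exp (-η * ℓv θ)
        ≤ ∑ θ, q θ * (1 - ℓv θ + ℓv θ * Real.exp (-η)) :=
          Finset.sum_le_sum fun θ _ => mul_le_mul_of_nonneg_left (hpt θ) (hq θ)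
      _ = (∑ θ, q θ) - m + m * Real.exp (-η) := by
          simp only [hm_def, Finset.sum_mul, ← Finset.sum_sub_distrib,
            ← Finset.sum_add_distrib]
          congr 1 with θ
          ring
      _ = 1 - m + m * Real.exp (-η) := by rw [hq1]
  have hSpos : 0 < ∑ θ, q θ * Real.exp (-η * ℓv θ) := by
    have hex : ∃ θ ∈ Finset.univ, 0 < q θ := by
      by_contra h
      push_neg at h
      have : ∑ θ, q θ = 0 := Finset.sum_eq_zero fun θ hθ => le_antisymm (h θ hθ) (hq θ)
      rw [hq1] at this; norm_num at this
    obtain ⟨θ0, _, hθ0⟩ := hex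
    exact Finset.sum_pos' (fun θ _ => mul_nonneg (hq θ) (Real.exp_pos _).le)
      ⟨θ0, Finset.mem_univ θ0, mul_pos hθ0 (Real.exp_pos _)⟩
  calc Real.log (∑ θ, q θ * Real.exp (-η * ℓv θ))
      ≤ Real.log (1 - m + m * Real.exp (-η)) := Real.log_le_log hSpos hS
    _ ≤ (-η) * m + (-η) ^ 2 / 8 := key_scalar hm0 hm1 (by linarith)
    _ = -η * m + η ^ 2 / 8 := by ring

lemma ew_core {N : ℕ} (hN : 0 < N) {η : ℝ} (hη : 0 < η) (n : ℕ)
    (ℓ : Fin N → ℕ → ℝ) (hℓ : ∀ θ i, ℓ θ i ∈ Set.Icc (0:ℝ) 1) (θ0 : Fin N) :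
    ∑ t ∈ Finset.range n,
      (∑ θ, Real.exp (-η * ∑ i ∈ Finset.range t, ℓ θ i) * ℓ θ t) /
        (∑ θ, Real.exp (-η * ∑ i ∈ Finset.range t, ℓ θ i))
    ≤ (∑ t ∈ Finset.range n, ℓ θ0 t) + Real.log N / η + n * η / 8 := by
  set W : ℕ → ℝ := fun t => ∑ θ, Real.exp (-η * ∑ i ∈ Finset.range t, ℓ θ i) with hW_def
  set mix : ℕ → ℝ := fun t =>
    (∑ θ, Real.exp (-η * ∑ i ∈ Finset.range t, ℓ θ i) * ℓ θ t) / W t with hmix_def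
  have hNE : Nonempty (Fin N) := Fin.pos_iff_nonempty.mp hN
  have hWpos : ∀ t, 0 < W t :=
    fun t => Finset.sum_pos (fun θ _ => Real.exp_pos _) Finset.univ_nonempty
  have hstep : ∀ t, Real.log (W (t + 1)) ≤ Real.log (W t) - η * mix t + η ^ 2 / 8 := by
    intro t
    set q : Fin N → ℝ := fun θ => Real.exp (-η * ∑ i ∈ Finset.range t, ℓ θ i) / W t
      with hq_def
    have hq : ∀ θ, 0 ≤ q θ := fun θ => div_nonneg (Real.exp_pos _).le (hWpos t).le
    have hq1 : ∑ θ, q θ = 1 := by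
      rw [← Finset.sum_div, div_self (hWpos t).ne']
    have hWsucc : W (t + 1) = W t * ∑ θ, q θ * Real.exp (-η * ℓ θ t) := by
      rw [Finset.mul_sum]
      refine Finset.sum_congr rfl fun θ _ => ?_
      have h1 : -η * ∑ i ∈ Finset.range (t + 1), ℓ θ i
          = -η * ∑ i ∈ Finset.range t, ℓ θ i + -η * ℓ θ t := by
        rw [Finset.sum_range_succ]; ring
      rw [h1, Real.exp_add, hq_def]
      field_simp
      rw [div_self (hWpos t).ne']
    have hmixq : mix t = ∑ θ, q θ * ℓ θ t := by
      rw [hmix_def]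
      simp only [hq_def]
      rw [Finset.sum_div]
      congr 1 with θ
      ring
    have hsumpos : 0 < ∑ θ, q θ * Real.exp (-η * ℓ θ t) :=
      Finset.sum_pos (fun θ _ => mul_pos (div_pos (Real.exp_pos _) (hWpos t))
        (Real.exp_pos _)) Finset.univ_nonempty
    rw [hWsucc, Real.log_mul (hWpos t).ne' hsumpos.ne']
    have := hoeffding_sum q (fun θ => ℓ θ t) hq hq1 (fun θ => hℓ θ t) hη.le
    rw [← hmixq] at this
    linarith
  have htel : ∀ k, Real.log (W k) ≤ Real.log (W 0)
      - η * ∑ t ∈ Finset.range k, mix t + k * η ^ 2 / 8 := by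
    intro k
    induction k with
    | zero => simp
    | succ k ih =>
      have h1 := hstep k
      rw [Finset.sum_range_succ]
      push_cast
      have hexp : η * (∑ t ∈ Finset.range k, mix t + mix k)
          = η * ∑ t ∈ Finset.range k, mix t + η * mix k := by ring
      rw [hexp]
      linarith
  have hW0 : Real.log (W 0) = Real.log N := by
    simp [hW_def]
  have hlb : -η * ∑ t ∈ Finset.range n, ℓ θ0 t ≤ Real.log (W n) := by
    have h1 : Real.exp (-η * ∑ i ∈ Finset.range n, ℓ θ0 i) ≤ W n :=
      Finset.single_le_sum (f := fun θ => Real.exp (-η * ∑ i ∈ Finset.range n, ℓ θ i))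
        (fun θ _ => (Real.exp_pos _).le) (Finset.mem_univ θ0)
    calc -η * ∑ t ∈ Finset.range n, ℓ θ0 t
        = Real.log (Real.exp (-η * ∑ i ∈ Finset.range n, ℓ θ0 i)) := (Real.log_exp _).symm
      _ ≤ Real.log (W n) := Real.log_le_log (Real.exp_pos _) h1
  have := (htel n).trans' hlb  -- -η L ≤ log W0 - η Σmix + nη²/8
  rw [hW0] at this
  -- divide by η
  have hdiv : η * ∑ t ∈ Finset.range n, mix t
      ≤ η * ((∑ t ∈ Finset.range n, ℓ θ0 t) + Real.log N / η + n * η / 8) := by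
    have hexp : η * ((∑ t ∈ Finset.range n, ℓ θ0 t) + Real.log N / η + n * η / 8)
        = η * (∑ t ∈ Finset.range n, ℓ θ0 t) + Real.log N + n * η ^ 2 / 8 := by
      field_simp
    rw [hexp]
    linarith
  exact le_of_mul_le_mul_left hdiv hη

lemma stdGauss_Iic (z : ℝ) :
    ((gaussianReal 0 1) (Set.Iic z)).toReal = stdNormalCDF z := by
  rw [gaussianReal_apply_eq_integral 0 one_ne_zero]
  rw [ENNReal.toReal_ofReal (setIntegral_nonneg measurableSet_Iic
    (fun x _ => gaussianPDFReal_nonneg 0 1 x))]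
  unfold stdNormalCDF gaussianPDFReal
  refine setIntegral_congr_fun measurableSet_Iic fun x _ => ?_
  simp only [NNReal.coe_one, mul_one, sub_zero, inv_mul_eq_div]

lemma stdGauss_singleton (a : ℝ) : (gaussianReal 0 1) {a} = 0 := by
  rw [gaussianReal_apply_eq_integral 0 one_ne_zero]
  rw [show (volume : Measure ℝ).restrict {a} = 0 from
    Measure.restrict_eq_zero.mpr (by simp), integral_zero_measure]
  simp

lemma stdGauss_Ioi (w : ℝ) :
    ((gaussianReal 0 1) (Set.Ioi w)).toReal = stdNormalCDF (-w) := by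
  have hneg : (gaussianReal 0 1).map (fun x : ℝ => -x) = gaussianReal 0 1 := by
    have h := gaussianReal_map_const_mul (μ := 0) (v := 1) (-1)
    have hv : (NNReal.mk ((-1:ℝ) ^ 2) (sq_nonneg _)) = 1 := Subtype.ext (by norm_num)
    have hfun : (fun x : ℝ => (-1 : ℝ) * x) = (fun x : ℝ => -x) := by
      funext x; ring
    rw [hv, hfun, mul_zero, one_mul] at h
    exact h
  have h1 : (gaussianReal 0 1) (Set.Ioi w) = (gaussianReal 0 1) (Set.Iio (-w)) := by
    conv_lhs => rw [← hneg]
    rw [Measure.map_apply measurable_neg measurableSet_Ioi]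
    congr 1
    ext x
    simp
  have h2 : (gaussianReal 0 1) (Set.Iic (-w))
      = (gaussianReal 0 1) (Set.Iio (-w)) + (gaussianReal 0 1) {-w} := by
    rw [← measure_union (by simp) (measurableSet_singleton _)]
    congr 1
    exact (Set.Iio_union_right).symm
  rw [h1, ← stdGauss_Iic]
  rw [h2, stdGauss_singleton, add_zero]

lemma gauss_shift {σ : ℝ} (hσ : 0 < σ) (m : ℝ) :
    gaussianReal m ⟨σ ^ 2, sq_nonneg σ⟩
      = Measure.map (fun x => σ * x + m) (gaussianReal 0 1) := by
  have h1 : (gaussianReal 0 1).map (σ * ·) = gaussianReal 0 ⟨σ ^ 2, sq_nonneg σ⟩ := by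
    rw [gaussianReal_map_const_mul σ]
    rw [mul_zero, mul_one]
    rfl
  have h2 : (gaussianReal 0 ⟨σ ^ 2, sq_nonneg σ⟩).map (· + m)
      = gaussianReal m ⟨σ ^ 2, sq_nonneg σ⟩ := by
    simpa only [zero_add] using gaussianReal_map_add_const (μ := 0) (v := ⟨σ ^ 2, sq_nonneg σ⟩) m
  rw [← h2, ← h1, Measure.map_map (by fun_prop) (by fun_prop)]
  rfl

lemma gauss_one {σ : ℝ} (hσ : 0 < σ) :
    ((gaussianReal 1 ⟨σ ^ 2, sq_nonneg σ⟩) (Set.Iic (1/2))).toReal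
      = stdNormalCDF (-(1 / (2 * σ))) := by
  rw [gauss_shift hσ 1, Measure.map_apply (by fun_prop) measurableSet_Iic]
  have hpre : (fun x => σ * x + 1) ⁻¹' (Set.Iic (1/2)) = Set.Iic (-(1 / (2 * σ))) := by
    ext x
    simp only [Set.mem_preimage, Set.mem_Iic]
    rw [show -(1 / (2 * σ)) = (-(1/2)) / σ by field_simp, le_div_iff₀ hσ]
    constructor <;> intro h <;> nlinarith
  rw [hpre, stdGauss_Iic]

lemma gauss_zero {σ : ℝ} (hσ : 0 < σ) :
    ((gaussianReal 0 ⟨σ ^ 2, sq_nonneg σ⟩) (Set.Ioi (1/2))).toReal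
      = stdNormalCDF (-(1 / (2 * σ))) := by
  rw [gauss_shift hσ 0, Measure.map_apply (by fun_prop) measurableSet_Ioi]
  have hpre : (fun x => σ * x + 0) ⁻¹' (Set.Ioi (1/2)) = Set.Ioi (1 / (2 * σ)) := by
    ext x
    simp only [Set.mem_preimage, Set.mem_Ioi, add_zero]
    rw [show (1 / (2 * σ)) = (1/2) / σ by field_simp, div_lt_iff₀ hσ]
    constructor <;> intro h <;> nlinarith
  rw [hpre, stdGauss_Ioi]

lemma pi_eval_preimage {n : ℕ} (μ : Fin n → Measure ℝ) [∀ i, IsProbabilityMeasure (μ i)]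
    (t : Fin n) {B : Set ℝ} (hB : MeasurableSet B) :
    Measure.pi μ ((fun s : Fin n → ℝ => s t) ⁻¹' B) = μ t B := by
  have : (fun s : Fin n → ℝ => s t) ⁻¹' B
      = Set.pi Set.univ (Function.update (fun _ => Set.univ) t B) := Set.eval_preimage
  rw [this, Measure.pi_pi]
  rw [Finset.prod_eq_single t
    (fun i _ hne => by rw [Function.update_of_ne hne]; exact measure_univ)
    (fun h => absurd (Finset.mem_univ t) h)]
  rw [Function.update_self]

lemma mix_abs {N : ℕ} (q g : Fin N → ℝ) (hq : ∀ θ, 0 < q θ)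
    (hQ : 0 < ∑ θ, q θ)
    (hg : ∀ θ, g θ ∈ Set.Icc (0:ℝ) 1) (y : Bool) :
    |(∑ θ, q θ * g θ) / (∑ θ, q θ) - b2r y|
      = (∑ θ, q θ * |g θ - b2r y|) / (∑ θ, q θ) := by
  cases y with
  | false =>
    have hb : b2r false = 0 := rfl
    rw [hb, sub_zero]
    simp only [sub_zero]
    rw [abs_of_nonneg (div_nonneg (Finset.sum_nonneg fun θ _ =>
      mul_nonneg (hq θ).le (hg θ).1) hQ.le)]
    congr 1
    exact Finset.sum_congr rfl fun θ _ => by rw [abs_of_nonneg (hg θ).1]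
  | true =>
    have hb : b2r true = 1 := rfl
    rw [hb]
    have hle : (∑ θ, q θ * g θ) ≤ ∑ θ, q θ :=
      Finset.sum_le_sum fun θ _ => by nlinarith [(hg θ).2, (hq θ).le]
    have h1 : (∑ θ, q θ * g θ) / (∑ θ, q θ) - 1 ≤ 0 := by
      rw [sub_nonpos, div_le_one hQ]; exact hle
    rw [abs_of_nonpos h1]
    have h2 : ∀ θ, |g θ - 1| = 1 - g θ := fun θ => by
      rw [abs_of_nonpos (by linarith [(hg θ).2] : g θ - 1 ≤ 0)]; ring
    have h4 : ∑ θ, q θ * |g θ - 1| = (∑ θ, q θ) - ∑ θ, q θ * g θ := by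
      rw [← Finset.sum_sub_distrib]
      refine Finset.sum_congr rfl fun θ _ => ?_
      rw [h2 θ]; ring
    rw [h4]
    field_simp
    ring

lemma eta_calc {n N : ℕ} (hn : 0 < n) (hN : 0 < N) :
    Real.log N / Real.sqrt (8 * Real.log (N + 1) / n)
      + n * Real.sqrt (8 * Real.log (N + 1) / n) / 8
    ≤ Real.sqrt ((n / 2) * Real.log (N + 1)) := by
  have hn' : (0:ℝ) < n := by exact_mod_cast hn
  have hL : (0:ℝ) < Real.log (N + 1) := by
    apply Real.log_pos
    have : (1:ℝ) ≤ N := by exact_mod_cast hN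
    linarith
  set L := Real.log ((N:ℝ) + 1) with hLdef
  set η := Real.sqrt (8 * L / n) with hηdef
  have hη : 0 < η := Real.sqrt_pos.mpr (by positivity)
  have hη2 : η ^ 2 = 8 * L / n := Real.sq_sqrt (by positivity)
  have hN' : (0:ℝ) < N := by exact_mod_cast hN
  have hlogN : Real.log N ≤ L := Real.log_le_log hN' (by linarith)
  have hkey : L / η + n * η / 8 = 2 * L / η := by
    have hee : η * η = 8 * L / ↑n := by rw [← sq]; exact hη2
    have h8 : (n:ℝ) * η / 8 = L / η := by
      rw [div_eq_div_iff (by norm_num) hη.ne', mul_assoc, hee]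
      field_simp
    rw [h8]; ring
  have hfin : 2 * L / η = Real.sqrt ((n / 2) * L) := by
    have hsq : ((n:ℝ) / 2) * L = (2 * L / η) ^ 2 := by
      rw [div_pow, hη2]
      field_simp
      ring
    rw [hsq, Real.sqrt_sq (by positivity)]
  calc Real.log N / η + n * η / 8 ≤ L / η + n * η / 8 := by
        gcongr
    _ = Real.sqrt ((n / 2) * L) := by rw [hkey, hfin]

end Aux

/-- Threshold forecaster. -/
noncomputable def thrF (n : ℕ) :
    (t : Fin n) → (Fin (t.1 + 1) → ℝ) → (Fin t.1 → Bool) → ℝ :=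
  fun t a _ => if a (Fin.last t.1) ≤ 1/2 then 0 else 1

/-- Exponential weights forecaster. -/
noncomputable def ewF {N n : ℕ} (f : Fin N → Fin n → ℝ) (η : ℝ) :
    (t : Fin n) → (Fin (t.1 + 1) → ℝ) → (Fin t.1 → Bool) → ℝ :=
  fun t _ b =>
    (∑ θ, Real.exp (-η * ∑ i : Fin t.1, |f θ (Fin.castLE t.isLt.le i) - b2r (b i)|)
        * f θ t) /
    (∑ θ, Real.exp (-η * ∑ i : Fin t.1, |f θ (Fin.castLE t.isLt.le i) - b2r (b i)|))

/-- **Corollary 3 (upper bound for the zero-mean Gaussian channel).**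
Target alphabet `{0,1}`, decision space `[0,1]`, absolute loss; the side
observations are `S_t = x_t + N_t` with `N_t` i.i.d. `N(0,σ²)`, `σ > 0`.  If the
best worst-case cumulative expert loss grows linearly,
`L*(n) = inf_x min_θ Σ_t |f^θ_t − x_t| = c_f·n`, then the minimax expected
regret satisfies `R(n) ≤ √((n/2)·log(N+1)) + min{0, n·(Φ(−1/(2σ)) − c_f)}`. -/
theorem gaussian_minimax_regret_upper_bound
    (n N : ℕ) (hn : 0 < n) (hN : 0 < N)
    (σ : ℝ) (hσ : 0 < σ)
    (f : Fin N → Fin n → ℝ) (hf : ∀ θ t, f θ t ∈ Set.Icc (0:ℝ) 1)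
    (cf : ℝ)
    (hL : (⨅ x : Fin n → Bool, ⨅ θ : Fin N, ∑ t, |f θ t - b2r (x t)|) = cf * n) :
    (⨅ F : {F : (t : Fin n) → (Fin (t.1 + 1) → ℝ) → (Fin t.1 → Bool) → ℝ //
        (∀ t, Measurable (Function.uncurry (F t))) ∧
        (∀ t a b, F t a b ∈ Set.Icc (0:ℝ) 1)},
      ⨆ x : Fin n → Bool,
        ∫ s : Fin n → ℝ,
          ((∑ t, |F.1 t (fun i => s (Fin.castLE t.isLt i))
              (fun i => x (Fin.castLE t.isLt.le i)) - b2r (x t)|)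
            - ⨅ θ : Fin N, ∑ t, |f θ t - b2r (x t)|)
          ∂(Measure.pi fun t => gaussianReal (b2r (x t)) ⟨σ ^ 2, sq_nonneg σ⟩))
    ≤ Real.sqrt ((n / 2) * Real.log (N + 1))
      + min 0 (n * (stdNormalCDF (-(1 / (2 * σ))) - cf)) := by
  haveI hNE : Nonempty (Fin N) := Fin.pos_iff_nonempty.mp hN
  haveI hnE : Nonempty (Fin n) := Fin.pos_iff_nonempty.mp hn
  set v : NNReal := ⟨σ ^ 2, sq_nonneg σ⟩ with hv
  set Φb := stdNormalCDF (-(1 / (2 * σ))) with hΦb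
  set C : (Fin n → Bool) → ℝ := fun x => ⨅ θ : Fin N, ∑ t, |f θ t - b2r (x t)| with hC
  have hb2r : ∀ b : Bool, b2r b ∈ Set.Icc (0:ℝ) 1 := by
    intro b; cases b <;> simp [b2r]
  have habs : ∀ (θ : Fin N) (t : Fin n) (b : Bool), |f θ t - b2r b| ∈ Set.Icc (0:ℝ) 1 := by
    intro θ t b
    constructor
    · exact abs_nonneg _
    · rw [abs_le]
      constructor <;> [nlinarith [(hf θ t).1, (hb2r b).2]; nlinarith [(hf θ t).2, (hb2r b).1]]
  have hC0 : ∀ x, 0 ≤ C x := fun x =>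
    le_ciInf fun θ => Finset.sum_nonneg fun t _ => abs_nonneg _
  have hCn : ∀ x, C x ≤ n := by
    intro x
    refine ciInf_le_of_le ((Set.finite_range _).bddBelow) (Classical.arbitrary _) ?_
    calc ∑ t, |f (Classical.arbitrary (Fin N)) t - b2r (x t)|
        ≤ ∑ _t : Fin n, (1:ℝ) :=
          Finset.sum_le_sum fun t _ => (habs _ t (x t)).2
      _ = n := by simp
  have hCcf : ∀ x, cf * n ≤ C x := fun x =>
    hL ▸ ciInf_le ((Set.finite_range _).bddBelow) x
  -- the outer infimum's range is bounded below
  have hbdd : BddBelow (Set.range fun F : {F : (t : Fin n) → (Fin (t.1 + 1) → ℝ) →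
        (Fin t.1 → Bool) → ℝ //
        (∀ t, Measurable (Function.uncurry (F t))) ∧
        (∀ t a b, F t a b ∈ Set.Icc (0:ℝ) 1)} =>
      ⨆ x : Fin n → Bool,
        ∫ s : Fin n → ℝ,
          ((∑ t, |F.1 t (fun i => s (Fin.castLE t.isLt i))
              (fun i => x (Fin.castLE t.isLt.le i)) - b2r (x t)|)
            - C x)
          ∂(Measure.pi fun t => gaussianReal (b2r (x t)) v)) := by
    refine ⟨-(n:ℝ), ?_⟩
    rintro _ ⟨F, rfl⟩
    have hx0 : ∀ x : Fin n → Bool, -(n:ℝ) ≤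
        ∫ s : Fin n → ℝ,
          ((∑ t, |F.1 t (fun i => s (Fin.castLE t.isLt i))
              (fun i => x (Fin.castLE t.isLt.le i)) - b2r (x t)|)
            - C x)
          ∂(Measure.pi fun t => gaussianReal (b2r (x t)) v) := by
      intro x
      by_cases hInt : Integrable (fun s : Fin n → ℝ =>
          ((∑ t, |F.1 t (fun i => s (Fin.castLE t.isLt i))
              (fun i => x (Fin.castLE t.isLt.le i)) - b2r (x t)|)
            - C x))
          (Measure.pi fun t => gaussianReal (b2r (x t)) v)
      · have hmono : ∀ s : Fin n → ℝ, -C x ≤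
            ((∑ t, |F.1 t (fun i => s (Fin.castLE t.isLt i))
              (fun i => x (Fin.castLE t.isLt.le i)) - b2r (x t)|) - C x) := by
          intro s
          have : (0:ℝ) ≤ ∑ t, |F.1 t (fun i => s (Fin.castLE t.isLt i))
              (fun i => x (Fin.castLE t.isLt.le i)) - b2r (x t)| :=
            Finset.sum_nonneg fun t _ => abs_nonneg _
          linarith
        calc -(n:ℝ) ≤ -C x := by linarith [hCn x]
          _ = ∫ _s : Fin n → ℝ, -C x
              ∂(Measure.pi fun t => gaussianReal (b2r (x t)) v) := by
            rw [integral_const]; simp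
          _ ≤ _ := integral_mono (integrable_const _) hInt fun s => hmono s
      · rw [integral_undef hInt]
        simp
    exact le_ciSup_of_le ((Set.finite_range _).bddAbove) (Classical.arbitrary _)
      (hx0 _)
  rcases le_total ((n:ℝ) * (Φb - cf)) 0 with hX | hX
  · -- threshold forecaster case
    rw [min_eq_right hX]
    have hmeas : ∀ t : Fin n, Measurable (Function.uncurry (thrF n t)) := by
      intro t
      unfold thrF Function.uncurry
      exact Measurable.ite
        (measurableSet_le (measurable_fst.eval) measurable_const)
        measurable_const measurable_const
    have hrange : ∀ (t : Fin n) a b, thrF n t a b ∈ Set.Icc (0:ℝ) 1 := by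
      intro t a b
      unfold thrF
      split <;> simp
    refine le_trans (ciInf_le_of_le hbdd ⟨thrF n, hmeas, hrange⟩ ?_)
      (le_add_of_nonneg_left (Real.sqrt_nonneg _))
    refine ciSup_le fun x => ?_
    -- compute the integral for the threshold forecaster
    have hint : ∫ s : Fin n → ℝ,
          ((∑ t, |thrF n t (fun i => s (Fin.castLE t.isLt i))
              (fun i => x (Fin.castLE t.isLt.le i)) - b2r (x t)|)
            - C x)
          ∂(Measure.pi fun t => gaussianReal (b2r (x t)) v)
        = (n:ℝ) * Φb - C x := by
      set St : Fin n → Set (Fin n → ℝ) := fun t =>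
        (fun s : Fin n → ℝ => s t) ⁻¹'
          (if x t then Set.Iic (1/2:ℝ) else Set.Ioi (1/2)) with hSt
      have hBmeas : ∀ t : Fin n,
          MeasurableSet (if x t then Set.Iic (1/2:ℝ) else Set.Ioi (1/2)) := by
        intro t; split
        exacts [measurableSet_Iic, measurableSet_Ioi]
      have hSt_meas : ∀ t, MeasurableSet (St t) :=
        fun t => (measurable_pi_apply t) (hBmeas t)
      have hlast : ∀ t : Fin n, Fin.castLE t.isLt (Fin.last t.1) = t :=
        fun t => rfl
      have hpt : ∀ (s : Fin n → ℝ) (t : Fin n),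
          |thrF n t (fun i => s (Fin.castLE t.isLt i))
            (fun i => x (Fin.castLE t.isLt.le i)) - b2r (x t)|
          = (St t).indicator (fun _ => (1:ℝ)) s := by
        intro s t
        have h1 : thrF n t (fun i => s (Fin.castLE t.isLt i))
            (fun i => x (Fin.castLE t.isLt.le i))
            = if s t ≤ 1/2 then 0 else 1 := rfl
        classical
        rw [h1, Set.indicator_apply]
        cases hxt : x t
        · have hmem : s ∈ St t ↔ 1/2 < s t := by
            rw [hSt]; simp [hxt]
          by_cases hs : s t ≤ 1/2
          · rw [if_pos hs, if_neg (fun h => absurd (hmem.mp h) (not_lt.mpr hs))]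
            simp [b2r]
          · rw [if_neg hs, if_pos (hmem.mpr (not_le.mp hs))]
            simp [b2r]
        · have hmem : s ∈ St t ↔ s t ≤ 1/2 := by
            rw [hSt]; simp [hxt]
          by_cases hs : s t ≤ 1/2
          · rw [if_pos hs, if_pos (hmem.mpr hs)]
            simp [b2r]
          · rw [if_neg hs, if_neg (fun h => absurd (hmem.mp h) hs)]
            simp [b2r]
      have hIt : ∀ t : Fin n,
          (∫ s : Fin n → ℝ, (St t).indicator (fun _ => (1:ℝ)) s
            ∂(Measure.pi fun t => gaussianReal (b2r (x t)) v)) = Φb := by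
        intro t
        rw [integral_indicator_const (1:ℝ) (hSt_meas t), smul_eq_mul, mul_one]
        rw [hSt]
        rw [measureReal_def]
        rw [pi_eval_preimage (fun t => gaussianReal (b2r (x t)) v) t (hBmeas t)]
        cases hxt : x t
        · have hb : b2r false = 0 := rfl
          rw [hb, if_neg (by simp)]
          exact gauss_zero hσ
        · have hb : b2r true = 1 := rfl
          rw [hb, if_pos rfl]
          exact gauss_one hσ
      have hInd : ∀ t : Fin n, Integrable ((St t).indicator (fun _ => (1:ℝ)))
          (Measure.pi fun t => gaussianReal (b2r (x t)) v) :=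
        fun t => (integrable_const (1:ℝ)).indicator (hSt_meas t)
      calc ∫ s : Fin n → ℝ,
            ((∑ t, |thrF n t (fun i => s (Fin.castLE t.isLt i))
              (fun i => x (Fin.castLE t.isLt.le i)) - b2r (x t)|) - C x)
            ∂(Measure.pi fun t => gaussianReal (b2r (x t)) v)
          = ∫ s : Fin n → ℝ,
            ((∑ t, (St t).indicator (fun _ => (1:ℝ)) s) - C x)
            ∂(Measure.pi fun t => gaussianReal (b2r (x t)) v) := by
            congr 1
            funext s
            rw [Finset.sum_congr rfl fun t _ => hpt s t]
        _ = (∑ t : Fin n, ∫ s : Fin n → ℝ, (St t).indicator (fun _ => (1:ℝ)) s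
              ∂(Measure.pi fun t => gaussianReal (b2r (x t)) v)) - C x := by
            rw [integral_sub (integrable_finset_sum _ fun t _ => hInd t)
              (integrable_const _), integral_finset_sum _ fun t _ => hInd t,
              integral_const]
            simp
        _ = (n:ℝ) * Φb - C x := by
            rw [Finset.sum_congr rfl fun t _ => hIt t]
            simp [mul_comm]
    rw [hint]
    have := hCcf x
    nlinarith [hCcf x]
  · -- exponential weights case
    rw [min_eq_left hX, add_zero]
    set η := Real.sqrt (8 * Real.log ((N:ℝ) + 1) / n) with hηdef
    have hL1 : (0:ℝ) < Real.log ((N:ℝ) + 1) := by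
      apply Real.log_pos
      have : (1:ℝ) ≤ N := by exact_mod_cast hN
      linarith
    have hn' : (0:ℝ) < n := by exact_mod_cast hn
    have hη : 0 < η := Real.sqrt_pos.mpr (by positivity)
    have hWpos : ∀ (t : Fin n) (b : Fin t.1 → Bool),
        0 < ∑ θ, Real.exp (-η * ∑ i : Fin t.1,
          |f θ (Fin.castLE t.isLt.le i) - b2r (b i)|) :=
      fun t b => Finset.sum_pos (fun θ _ => Real.exp_pos _) Finset.univ_nonempty
    have hmeas : ∀ t : Fin n, Measurable (Function.uncurry (ewF f η t)) := by
      intro t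
      exact (measurable_of_countable
        (fun b : Fin t.1 → Bool =>
          (∑ θ, Real.exp (-η * ∑ i : Fin t.1,
              |f θ (Fin.castLE t.isLt.le i) - b2r (b i)|) * f θ t) /
          (∑ θ, Real.exp (-η * ∑ i : Fin t.1,
              |f θ (Fin.castLE t.isLt.le i) - b2r (b i)|)))).comp measurable_snd
    have hrange : ∀ (t : Fin n) a b, ewF f η t a b ∈ Set.Icc (0:ℝ) 1 := by
      intro t a b
      unfold ewF
      constructor
      · exact div_nonneg (Finset.sum_nonneg fun θ _ =>
          mul_nonneg (Real.exp_pos _).le (hf θ t).1) (hWpos t b).le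
      · rw [div_le_one (hWpos t b)]
        exact Finset.sum_le_sum fun θ _ => by
          nlinarith [(hf θ t).2, (Real.exp_pos (-η * ∑ i : Fin t.1,
            |f θ (Fin.castLE t.isLt.le i) - b2r (b i)|)).le]
    refine ciInf_le_of_le hbdd ⟨ewF f η, hmeas, hrange⟩ ?_
    refine ciSup_le fun x => ?_
    have hconst : (fun s : Fin n → ℝ =>
          ((∑ t, |ewF f η t (fun i => s (Fin.castLE t.isLt i))
              (fun i => x (Fin.castLE t.isLt.le i)) - b2r (x t)|)
            - C x))
        = (fun _ =>
          ((∑ t, |ewF f η t (fun i => (0:ℝ))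
              (fun i => x (Fin.castLE t.isLt.le i)) - b2r (x t)|)
            - C x)) := by
      funext s
      rfl
    rw [hconst, integral_const]
    simp only [measureReal_def, measure_univ, ENNReal.toReal_one, one_smul]
    -- now the deterministic EW bound
    set ℓx : Fin N → ℕ → ℝ := fun θ i =>
      if h : i < n then |f θ ⟨i, h⟩ - b2r (x ⟨i, h⟩)| else 0 with hℓx
    have hℓx01 : ∀ θ i, ℓx θ i ∈ Set.Icc (0:ℝ) 1 := by
      intro θ i
      simp only [hℓx]
      split
      · exact habs θ _ _
      · exact ⟨le_rfl, zero_le_one⟩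
    have hsum_past : ∀ (θ : Fin N) (t : Fin n),
        (∑ i : Fin t.1, |f θ (Fin.castLE t.isLt.le i)
            - b2r (x (Fin.castLE t.isLt.le i))|)
          = ∑ i ∈ Finset.range t.1, ℓx θ i := by
      intro θ t
      rw [← Fin.sum_univ_eq_sum_range (fun i => ℓx θ i) t.1]
      refine Finset.sum_congr rfl fun i _ => ?_
      have hi : (i:ℕ) < n := lt_trans i.isLt t.isLt
      simp only [hℓx, dif_pos hi]
      rfl
    have hℓxt : ∀ (θ : Fin N) (t : Fin n), ℓx θ t.1 = |f θ t - b2r (x t)| := by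
      intro θ t
      simp only [hℓx, dif_pos t.isLt]
    have hsum_full : ∀ θ : Fin N,
        (∑ t, |f θ t - b2r (x t)|) = ∑ t ∈ Finset.range n, ℓx θ t := by
      intro θ
      rw [← Fin.sum_univ_eq_sum_range (fun i => ℓx θ i) n]
      refine Finset.sum_congr rfl fun t _ => ?_
      simp only [hℓx, dif_pos t.isLt]
    have hmix : ∀ t : Fin n,
        |ewF f η t (fun _ => (0:ℝ)) (fun i => x (Fin.castLE t.isLt.le i)) - b2r (x t)|
        = (∑ θ, Real.exp (-η * ∑ i ∈ Finset.range t.1, ℓx θ i) * ℓx θ t.1) /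
          (∑ θ, Real.exp (-η * ∑ i ∈ Finset.range t.1, ℓx θ i)) := by
      intro t
      unfold ewF
      rw [mix_abs _ _ (fun θ => Real.exp_pos _) (hWpos t _) (fun θ => hf θ t) (x t)]
      congr 1
      · refine Finset.sum_congr rfl fun θ _ => ?_
        rw [hsum_past θ t, hℓxt θ t]
      · refine Finset.sum_congr rfl fun θ _ => ?_
        rw [hsum_past θ t]
    have hTmix :
        (∑ t : Fin n, |ewF f η t (fun _ => (0:ℝ))
            (fun i => x (Fin.castLE t.isLt.le i)) - b2r (x t)|)
        = ∑ t ∈ Finset.range n,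
            (∑ θ, Real.exp (-η * ∑ i ∈ Finset.range t, ℓx θ i) * ℓx θ t) /
            (∑ θ, Real.exp (-η * ∑ i ∈ Finset.range t, ℓx θ i)) := by
      rw [← Fin.sum_univ_eq_sum_range (fun t =>
            (∑ θ, Real.exp (-η * ∑ i ∈ Finset.range t, ℓx θ i) * ℓx θ t) /
            (∑ θ, Real.exp (-η * ∑ i ∈ Finset.range t, ℓx θ i))) n]
      exact Finset.sum_congr rfl fun t _ => hmix t
    obtain ⟨θ0, hθ0⟩ := Finite.exists_min (fun θ : Fin N => ∑ t, |f θ t - b2r (x t)|)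
    have hCx : C x = ∑ t, |f θ0 t - b2r (x t)| :=
      le_antisymm (ciInf_le ((Set.finite_range _).bddBelow) θ0) (le_ciInf hθ0)
    have hcore := ew_core hN hη n ℓx hℓx01 θ0
    have heta := eta_calc hn hN
    rw [← hηdef] at heta
    rw [hTmix, hCx, hsum_full θ0]
    linarith
end
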